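/- arXiv:1706.00276 — 8 statements merged into one kernel-verified Lean document; each statement's English description precedes it below -/
import Mathlib

section
/- For every countably infinite group G, there exists a family 𝔉 of nonempty subsets of G with |𝔉| = 2^ℵ₀ such that any two distinct members of 𝔉 are not coarsely equivalent as subsets of G. -/
open Pointwise

/-- The ball `B_X(x, F) = ((F·x) ∪ {x}) ∩ X` in a subset `X` of a group `G`. -/
def ballIn {G : Type*} [Group G] (X : Set G) (F : Finset G) (x : G) : Set G :=
  ((F : Set G) * {x} ∪ {x}) ∩ X

/-- A bijection `f : X ≃ X'` between subsets of a group `G` is an asymorphism if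
it is coarse in both directions. -/
def IsAsymorphism {G : Type*} [Group G] (X X' : Set G) (f : X ≃ X') : Prop :=
  (∀ F : Finset G, ∃ F' : Finset G, ∀ x y : X,
      (y : G) ∈ (F : Set G) * {(x : G)} ∪ {(x : G)} →
      (f y : G) ∈ (F' : Set G) * {(f x : G)} ∪ {(f x : G)}) ∧
  (∀ F : Finset G, ∃ F' : Finset G, ∀ x y : X',
      (y : G) ∈ (F : Set G) * {(x : G)} ∪ {(x : G)} →
      (f.symm y : G) ∈ (F' : Set G) * {(f.symm x : G)} ∪ {(f.symm x : G)})

/-- `Y` is a large subset of `X` (subsets of a group `G`). -/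
def LargeIn {G : Type*} [Group G] (Y X : Set G) : Prop :=
  Y ⊆ X ∧ ∃ F : Finset G, X ⊆ (F : Set G) * Y ∪ Y

/-- Subsets `X, X'` of a group `G` are coarsely equivalent if some large subsets
of each are asymorphic. -/
def CoarselyEquiv {G : Type*} [Group G] (X X' : Set G) : Prop :=
  ∃ Y Y' : Set G, LargeIn Y X ∧ LargeIn Y' X' ∧ ∃ f : Y ≃ Y', IsAsymorphism Y Y' f


/-!
For a set `S ⊆ ℕ` of types, `X_S` is a union of far-apart translates `K u · x_n` of finite shapes
`K u`, infinitely many of each type `u ∈ S`. The shapes grow so fast, and are so uniformly thick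
at bounded scales, that for all large `s` the set `X_S` has infinitely many isolated clusters of
size `|K s|` (up to a bounded factor) exactly when `s ∈ S`. Passing to a large subset or along an
asymorphism changes that factor only boundedly, so `X_S` and `X_{S'}` coarsely equivalent forces
`S \ S'` to be finite, and an almost disjoint family of `2^ℵ₀` infinite subsets of `ℕ` gives the
theorem. The shapes are balls in an infinite finitely generated subgroup or, when every finitely
generated subgroup is finite, an increasing chain of finite subgroups.
-/

open Set Filter Function

namespace CoarseClusters

variable {G : Type*} [Group G]

section Fibers

variable {α β : Type*} {X : Set α} {g : α → β} {k : ℕ}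

theorem ncard_le_mul_ncard_of_mapsTo {s : Set α} {t : Set β} (hs : s.Finite) (ht : t.Finite)
    (hst : MapsTo g s t) (hsX : s ⊆ X) (hfib : ∀ b, {x ∈ X | g x = b}.encard ≤ k) :
    s.ncard ≤ k * t.ncard := by
  classical
  rw [ncard_eq_toFinset_card s hs, ncard_eq_toFinset_card t ht]
  refine Finset.card_le_mul_card_image_of_maps_to (f := g) (fun a ha => ?_) k fun b _ => ?_
  · simpa using hst (by simpa using ha)
  have hsub : {x ∈ s | g x = b} ⊆ {x ∈ X | g x = b} := fun x hx => ⟨hsX hx.1, hx.2⟩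
  have := (encard_le_coe_iff_finite_ncard_le.1 ((encard_le_encard hsub).trans (hfib b))).2
  simpa [← ncard_coe_finset] using this

theorem _root_.Set.Infinite.image_of_encard_fiber_le {A : Set α} (hA : A.Infinite) (hAX : A ⊆ X)
    (hfib : ∀ b, {x ∈ X | g x = b}.encard ≤ k) : (g '' A).Infinite := fun hfin =>
  hA <| (hfin.biUnion fun b _ => (encard_le_coe_iff.1 (hfib b)).1).subset fun _ hx =>
    mem_biUnion (mem_image_of_mem g hx) ⟨hAX hx, rfl⟩

theorem encard_fiber_le_one_of_equiv {X' : Set β} (f : X ≃ X') (hg : ∀ x : X, g x = f x) (b : β) :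
    {x ∈ X | g x = b}.encard ≤ 1 :=
  encard_le_one_iff.2 fun x y hx hy => by
    have hxy := hx.2.trans hy.2.symm
    rw [hg ⟨x, hx.1⟩, hg ⟨y, hy.1⟩] at hxy
    simpa using f.injective (Subtype.ext hxy)

end Fibers

section Balls

variable {X Y : Set G} {F F' : Finset G} {x y z : G}

theorem mem_ballIn_self (hx : x ∈ X) : x ∈ ballIn X F x :=
  ⟨Or.inr rfl, hx⟩

theorem ballIn_finite (X : Set G) (F : Finset G) (x : G) : (ballIn X F x).Finite :=
  ((F.finite_toSet.mul (finite_singleton x)).union (finite_singleton x)).subset inter_subset_left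

theorem ballIn_mono (hF : F ⊆ F') (hXY : X ⊆ Y) : ballIn X F x ⊆ ballIn Y F' x :=
  inter_subset_inter (union_subset_union_left _ (mul_subset_mul_right (by simpa using hF))) hXY

variable [DecidableEq G]

theorem mem_mul_singleton : y ∈ F * {x} ↔ y * x⁻¹ ∈ F := by
  rw [Finset.mem_mul]
  simp [← eq_mul_inv_iff_mul_eq]

theorem mem_mul_singleton_union_singleton :
    y ∈ (F : Set G) * {x} ∪ {x} ↔ y * x⁻¹ ∈ insert 1 F := by
  simp [Set.mul_singleton, mul_inv_eq_one]

theorem mem_ballIn : y ∈ ballIn X F x ↔ y * x⁻¹ ∈ insert 1 F ∧ y ∈ X := by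
  rw [ballIn, mem_inter_iff, mem_mul_singleton_union_singleton]

theorem mem_ballIn_trans (hz : z ∈ ballIn X F y) (hy : y ∈ ballIn Y F' x) :
    z ∈ ballIn X (insert 1 F * insert 1 F') x := by
  rw [mem_ballIn] at *
  refine ⟨Finset.mem_insert_of_mem ?_, hz.2⟩
  simpa using Finset.mul_mem_mul hz.1 hy.1

end Balls

section CoarseMaps

variable {X X' : Set G} {g h : G → G} {k : ℕ}

def IsBornologousOn (g : G → G) (X X' : Set G) : Prop :=
  ∀ F : Finset G, ∃ F' : Finset G, ∀ x ∈ X, MapsTo g (ballIn X F x) (ballIn X' F' (g x))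

theorem IsBornologousOn.mapsTo (hg : IsBornologousOn g X X') : MapsTo g X X' := fun x hx => by
  obtain ⟨F', hF'⟩ := hg ∅
  exact (hF' x hx (mem_ballIn_self hx)).2

structure IsBoundedCoarseEquiv (X X' : Set G) (g h : G → G) (k : ℕ) : Prop where
  bornologous_left : IsBornologousOn g X X'
  bornologous_right : IsBornologousOn h X' X
  fiber_left : ∀ b, {x ∈ X | g x = b}.encard ≤ k
  fiber_right : ∀ b, {x ∈ X' | h x = b}.encard ≤ k
  close_left : ∃ C : Finset G, ∀ x ∈ X, h (g x) ∈ ballIn X C x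
  close_right : ∃ C : Finset G, ∀ x ∈ X', g (h x) ∈ ballIn X' C x

theorem IsBoundedCoarseEquiv.symm (e : IsBoundedCoarseEquiv X X' g h k) :
    IsBoundedCoarseEquiv X' X h g k :=
  ⟨e.2, e.1, e.4, e.3, e.6, e.5⟩

theorem isBornologousOn_of_equiv (f : X ≃ X') (hg : ∀ x : X, g x = f x)
    (hf : ∀ F : Finset G, ∃ F' : Finset G, ∀ x y : X,
      (y : G) ∈ (F : Set G) * {(x : G)} ∪ {(x : G)} →
      (f y : G) ∈ (F' : Set G) * {(f x : G)} ∪ {(f x : G)}) :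
    IsBornologousOn g X X' := fun F => by
  obtain ⟨F', hF'⟩ := hf F
  refine ⟨F', fun x hx y hy => ?_⟩
  rw [hg ⟨x, hx⟩, hg ⟨y, hy.2⟩]
  exact ⟨hF' ⟨x, hx⟩ ⟨y, hy.2⟩ hy.1, (f _).2⟩

theorem _root_.IsAsymorphism.exists_isBoundedCoarseEquiv {f : X ≃ X'} (hf : IsAsymorphism X X' f) :
    ∃ g h : G → G, IsBoundedCoarseEquiv X X' g h 1 := by
  obtain ⟨g, hg⟩ : ∃ g : G → G, ∀ x : X, g x = f x :=
    ⟨extend Subtype.val (fun x => (f x : G)) id, Subtype.val_injective.extend_apply _ _⟩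
  obtain ⟨h, hh⟩ : ∃ h : G → G, ∀ x : X', h x = f.symm x :=
    ⟨extend Subtype.val (fun x => (f.symm x : G)) id, Subtype.val_injective.extend_apply _ _⟩
  refine ⟨g, h,
    { bornologous_left := isBornologousOn_of_equiv f hg hf.1
      bornologous_right := isBornologousOn_of_equiv f.symm hh hf.2
      fiber_left := encard_fiber_le_one_of_equiv f hg
      fiber_right := encard_fiber_le_one_of_equiv f.symm hh
      close_left := ⟨∅, fun x hx => ?_⟩
      close_right := ⟨∅, fun x hx => ?_⟩ }⟩
  · rw [hg ⟨x, hx⟩, hh, Equiv.symm_apply_apply]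
    exact mem_ballIn_self hx
  · rw [hh ⟨x, hx⟩, hg, Equiv.apply_symm_apply]
    exact mem_ballIn_self hx

theorem _root_.CoarselyEquiv.refl (X : Set G) : CoarselyEquiv X X :=
  ⟨X, X, ⟨subset_rfl, ∅, by simp⟩, ⟨subset_rfl, ∅, by simp⟩, Equiv.refl X,
    fun F => ⟨F, fun _ _ hy => hy⟩, fun F => ⟨F, fun _ _ hy => hy⟩⟩

variable [DecidableEq G]

theorem _root_.LargeIn.exists_isBoundedCoarseEquiv {Y : Set G} (hY : LargeIn Y X) :
    ∃ (σ : G → G) (k : ℕ), IsBoundedCoarseEquiv Y X id σ k := by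
  obtain ⟨hYX, F, hF⟩ := hY
  have hcover : ∀ x ∈ X, ∃ y ∈ Y, x * y⁻¹ ∈ insert 1 F := fun x hx => by
    rcases hF hx with ⟨f, hf, y, hy, rfl⟩ | hxY
    · exact ⟨y, hy, by simp only [mul_inv_cancel_right]; exact Finset.mem_insert_of_mem hf⟩
    · exact ⟨x, hxY, by simp⟩
  choose! σ hσY hσ using hcover
  have hσ_near : ∀ x ∈ X, σ x ∈ ballIn X (insert 1 F)⁻¹ x := fun x hx =>
    mem_ballIn.2 ⟨Finset.mem_insert_of_mem (by simpa using Finset.inv_mem_inv (hσ x hx)),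
      hYX (hσY x hx)⟩
  refine ⟨σ, F.card + 1,
    { bornologous_left := fun F' => ⟨F', fun _ _ z hz => ballIn_mono subset_rfl hYX hz⟩
      bornologous_right := fun F' =>
        ⟨(insert 1 F)⁻¹ * insert 1 F' * insert 1 F, fun x hx z hz => ?_⟩
      fiber_left := fun b => (encard_le_one_iff.2 fun x y hx hy => hx.2.trans hy.2.symm).trans
        (by exact_mod_cast Nat.le_add_left 1 F.card)
      fiber_right := fun b => ?_
      close_left := ⟨(insert 1 F)⁻¹, fun y hy => ⟨(hσ_near y (hYX hy)).1, hσY y (hYX hy)⟩⟩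
      close_right := ⟨(insert 1 F)⁻¹, hσ_near⟩ }⟩
  · obtain ⟨hzx, hzX⟩ := mem_ballIn.1 hz
    refine mem_ballIn.2 ⟨Finset.mem_insert_of_mem ?_, hσY z hzX⟩
    have hsplit : σ z * (σ x)⁻¹ = (z * (σ z)⁻¹)⁻¹ * (z * x⁻¹) * (x * (σ x)⁻¹) := by group
    rw [hsplit]
    exact Finset.mul_mem_mul (Finset.mul_mem_mul (Finset.inv_mem_inv (hσ z hzX)) hzx) (hσ x hx)
  · have hsub : {x ∈ X | σ x = b} ⊆ ((insert 1 F * {b} : Finset G) : Set G) := by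
      rintro x ⟨hx, rfl⟩
      exact mem_mul_singleton.2 (hσ x hx)
    refine (encard_le_encard hsub).trans ?_
    rw [encard_coe_eq_coe_finsetCard, Finset.card_mul_singleton]
    exact_mod_cast Finset.card_insert_le 1 F

end CoarseMaps

section Clusters

variable [DecidableEq G] {X X' : Set G} {g h : G → G} {k lam c : ℕ}

def HasClustersOfSize (X : Set G) (lam c : ℕ) : Prop :=
  ∃ Φ : Finset G, ∀ Ψ : Finset G, Φ ⊆ Ψ →
    {x ∈ X | c ≤ lam * (ballIn X Φ x).ncard ∧ (ballIn X Ψ x).ncard ≤ lam * c}.Infinite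

theorem HasClustersOfSize.of_isBoundedCoarseEquiv (e : IsBoundedCoarseEquiv X X' g h k)
    (hX : HasClustersOfSize X lam c) : HasClustersOfSize X' (lam * k) c := by
  obtain ⟨Φ, hΦ⟩ := hX
  obtain ⟨Φ', hgΦ⟩ := e.bornologous_left Φ
  obtain ⟨C, hC⟩ := e.close_left
  refine ⟨Φ', fun Ψ' _ => ?_⟩
  obtain ⟨Ψ, hhΨ⟩ := e.bornologous_right Ψ'
  have hgood := hΦ (Φ ∪ insert 1 Ψ * insert 1 C) Finset.subset_union_left
  refine (hgood.image_of_encard_fiber_le (sep_subset _ _) e.fiber_left).mono ?_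
  rintro _ ⟨x, ⟨hx, hlow, hup⟩, rfl⟩
  have hgx := e.bornologous_left.mapsTo hx
  refine ⟨hgx, ?_, ?_⟩
  · calc c ≤ lam * (ballIn X Φ x).ncard := hlow
      _ ≤ lam * (k * (ballIn X' Φ' (g x)).ncard) := by
        gcongr
        exact ncard_le_mul_ncard_of_mapsTo (ballIn_finite _ _ _) (ballIn_finite _ _ _)
          (hgΦ x hx) inter_subset_right e.fiber_left
      _ = lam * k * (ballIn X' Φ' (g x)).ncard := by ring
  · have hmaps : MapsTo h (ballIn X' Ψ' (g x)) (ballIn X (Φ ∪ insert 1 Ψ * insert 1 C) x) :=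
      fun z hz => ballIn_mono Finset.subset_union_right subset_rfl
        (mem_ballIn_trans (hhΨ _ hgx hz) (hC x hx))
    calc (ballIn X' Ψ' (g x)).ncard ≤ k * (ballIn X (Φ ∪ insert 1 Ψ * insert 1 C) x).ncard :=
          ncard_le_mul_ncard_of_mapsTo (ballIn_finite _ _ _) (ballIn_finite _ _ _) hmaps
            inter_subset_right e.fiber_right
      _ ≤ k * (lam * c) := by gcongr
      _ = lam * k * c := by ring

theorem _root_.CoarselyEquiv.exists_hasClustersOfSize (hXX' : CoarselyEquiv X X') :
    ∃ k : ℕ, ∀ c, HasClustersOfSize X 1 c → HasClustersOfSize X' k c := by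
  obtain ⟨Y, Y', hY, hY', f, hf⟩ := hXX'
  obtain ⟨σ, k, e₁⟩ := hY.exists_isBoundedCoarseEquiv
  obtain ⟨g, h, e₂⟩ := hf.exists_isBoundedCoarseEquiv
  obtain ⟨σ', k', e₃⟩ := hY'.exists_isBoundedCoarseEquiv
  exact ⟨1 * k * 1 * k', fun c hc =>
    ((hc.of_isBoundedCoarseEquiv e₁.symm).of_isBoundedCoarseEquiv e₂).of_isBoundedCoarseEquiv e₃⟩

end Clusters

section Shapes

theorem mul_lt_of_growth {c : ℕ → ℕ}
    (hgrow : ∀ w, 2 ^ (w + 1) * c w ^ 2 < c (w + 1)) {lam u v : ℕ} (huv : u < v)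
    (hlam : lam < 2 ^ v) : lam * c u < c v := by
  have hmono : Monotone c := monotone_nat_of_le_succ fun w =>
    calc c w ≤ c w ^ 2 := Nat.le_self_pow two_ne_zero _
      _ ≤ 2 ^ (w + 1) * c w ^ 2 := Nat.le_mul_of_pos_left _ (by positivity)
      _ ≤ c (w + 1) := (hgrow w).le
  obtain ⟨w, rfl⟩ := Nat.exists_eq_add_of_le' (Nat.one_le_of_lt huv)
  calc lam * c u ≤ 2 ^ (w + 1) * c w := Nat.mul_le_mul hlam.le (hmono (Nat.le_of_lt_succ huv))
    _ ≤ 2 ^ (w + 1) * c w ^ 2 := Nat.mul_le_mul_left _ (Nat.le_self_pow two_ne_zero _)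
    _ < c (w + 1) := hgrow w

variable [DecidableEq G]

def IsScaleSeparated (K : ℕ → Finset G) : Prop :=
  ∀ lam : ℕ, ∃ s₀, ∀ s, s₀ ≤ s → ∃ D : Finset G, ∀ u, u ≠ s →
    lam * (K u).card < (K s).card ∨ ∀ x ∈ K u, lam * (K s).card < (D * {x} ∩ K u).card

def IsThick (B : ℕ → Finset G) : Prop :=
  ∀ j, ∃ D : Finset G, ∀ k, j ≤ k → ∀ x ∈ B k, (B j).card ≤ (D * {x} ∩ B k).card

/-- Pass to a subsequence with `|K (u + 1)| > 2 ^ (u + 1) |K u|²`. For `s ≥ lam`, every `K u` with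
`u < s` has `lam |K u| < |K s|`, and for `u > s` every point of `K u` sees more than `lam |K s|`
points of `K u` at the scale `D` attached to the first `B j` with `|B j| > lam |K s|`. -/
theorem IsThick.exists_isScaleSeparated {B : ℕ → Finset G} (hB : IsThick B) (h1 : ∀ k, 1 ∈ B k)
    (hunb : ∀ N, ∃ k, N < (B k).card) :
    ∃ K : ℕ → Finset G, (∀ u, 1 ∈ K u) ∧ IsScaleSeparated K := by
  classical
  let idx : ℕ → ℕ := fun u =>
    Nat.rec 0 (fun u i => Nat.find (hunb (2 ^ (u + 1) * (B i).card ^ 2))) u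
  have hgrow : ∀ u, 2 ^ (u + 1) * (B (idx u)).card ^ 2 < (B (idx (u + 1))).card :=
    fun u => Nat.find_spec (hunb _)
  refine ⟨fun u => B (idx u), fun u => h1 _, fun lam => ⟨lam, fun s hs => ?_⟩⟩
  have hlam : lam < 2 ^ s := (Nat.lt_two_pow_self).trans_le (Nat.pow_le_pow_right two_pos hs)
  obtain ⟨D, hD⟩ := hB (Nat.find (hunb (lam * (B (idx s)).card)))
  refine ⟨D, fun u hu => hu.lt_or_gt.imp (fun hlt => mul_lt_of_growth hgrow hlt hlam)
    fun hgt x hx => ?_⟩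
  have hbig := mul_lt_of_growth hgrow hgt (hlam.trans (Nat.pow_lt_pow_right one_lt_two hgt))
  exact (Nat.find_spec (hunb _)).trans_le (hD _ (Nat.find_min' _ hbig) x hx)

theorem isThick_pow {Φ : Finset G} (hsymm : Φ⁻¹ = Φ) : IsThick (Φ ^ ·) := fun j => by
  refine ⟨Φ ^ (2 * j), fun k hjk x (hx : x ∈ Φ ^ k) => ?_⟩
  show (Φ ^ j).card ≤ (Φ ^ (2 * j) * {x} ∩ Φ ^ k).card
  rw [← Nat.add_sub_cancel' hjk, pow_add] at hx
  obtain ⟨b, hb, y, hy, rfl⟩ := Finset.mem_mul.1 hx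
  have hsub : Φ ^ j * {y} ⊆ Φ ^ (2 * j) * {b * y} ∩ Φ ^ k := by
    intro z hz
    rw [mem_mul_singleton] at hz
    refine Finset.mem_inter.2 ⟨mem_mul_singleton.2 ?_, ?_⟩
    · have hb' : b⁻¹ ∈ Φ ^ j := by simpa [← inv_pow, hsymm] using Finset.inv_mem_inv hb
      rw [two_mul, pow_add, mul_inv_rev, ← mul_assoc]
      exact Finset.mul_mem_mul hz hb'
    · rw [← Nat.add_sub_cancel' hjk, pow_add, ← inv_mul_cancel_right z y]
      exact Finset.mul_mem_mul hz hy
  calc (Φ ^ j).card = (Φ ^ j * {y}).card := (Finset.card_mul_singleton _ _).symm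
    _ ≤ _ := Finset.card_le_card hsub

theorem isThick_of_mul_mem {B : ℕ → Finset G} (hmono : Monotone B)
    (hmul : ∀ k, ∀ a ∈ B k, ∀ b ∈ B k, a * b ∈ B k) : IsThick B := fun j => by
  refine ⟨B j, fun k hjk x hx => ?_⟩
  have hsub : B j * {x} ⊆ B k := fun z hz => by
    simpa using hmul k _ (hmono hjk (mem_mul_singleton.1 hz)) x hx
  rw [Finset.inter_eq_left.2 hsub, Finset.card_mul_singleton]

theorem exists_card_pow_gt {Φ : Finset G} (h1 : 1 ∈ Φ) (hsymm : Φ⁻¹ = Φ)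
    (hinf : (Subgroup.closure (Φ : Set G) : Set G).Infinite) (N : ℕ) :
    ∃ k, N < (Φ ^ k).card := by
  have hpow : ∀ g ∈ Subgroup.closure (Φ : Set G), ∃ k, g ∈ Φ ^ k := by
    intro g hg
    induction hg using Subgroup.closure_induction with
    | mem g hg => exact ⟨1, by simpa using hg⟩
    | one => exact ⟨0, by simp⟩
    | mul g g' _ _ ih ih' =>
      obtain ⟨⟨k, hk⟩, ⟨k', hk'⟩⟩ := And.intro ih ih'
      exact ⟨k + k', by simpa [pow_add] using Finset.mul_mem_mul hk hk'⟩
    | inv g _ ih =>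
      obtain ⟨k, hk⟩ := ih
      exact ⟨k, by simpa [← inv_pow, hsymm] using Finset.inv_mem_inv hk⟩
  obtain ⟨t, hts, htcard⟩ := hinf.exists_subset_card_eq (N + 1)
  choose! idx hidx using fun g (hg : g ∈ t) => hpow g (hts hg)
  have hsub : t ⊆ Φ ^ t.sup idx := fun g hg =>
    Finset.pow_subset_pow_right h1 (Finset.le_sup hg) (hidx g hg)
  exact ⟨t.sup idx, by grind [Finset.card_le_card hsub]⟩

theorem exists_isThick [Infinite G] :
    ∃ B : ℕ → Finset G, IsThick B ∧ (∀ k, 1 ∈ B k) ∧ ∀ N, ∃ k, N < (B k).card := by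
  by_cases hfin : ∀ Φ : Finset G, (Subgroup.closure (Φ : Set G) : Set G).Finite
  · let e := Infinite.natEmbedding G
    let B : ℕ → Finset G := fun k => (hfin ((Finset.range k).map e)).toFinset
    have hmem : ∀ k g,
        g ∈ B k ↔ g ∈ Subgroup.closure (((Finset.range k).map e : Finset G) : Set G) :=
      fun k g => Finite.mem_toFinset _
    refine ⟨B, isThick_of_mul_mem (fun j k hjk g hg => ?_) fun k a ha b hb => ?_,
      fun k => (hmem k 1).2 (one_mem _), fun N => ⟨N + 1, ?_⟩⟩
    · rw [hmem] at hg ⊢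
      exact Subgroup.closure_mono (Finset.coe_subset.2 (Finset.map_subset_map.2
        (Finset.range_subset_range.2 hjk))) hg
    · rw [hmem] at ha hb ⊢
      exact mul_mem ha hb
    · calc N < ((Finset.range (N + 1)).map e).card := by simp
        _ ≤ (B (N + 1)).card := Finset.card_le_card fun g hg =>
          (hmem _ g).2 (Subgroup.subset_closure hg)
  · obtain ⟨Φ, hΦ⟩ := not_forall.1 hfin
    let Φ₀ : Finset G := insert 1 Φ ∪ (insert 1 Φ)⁻¹
    have h1 : 1 ∈ Φ₀ := Finset.mem_union_left _ (Finset.mem_insert_self _ _)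
    have hsymm : Φ₀⁻¹ = Φ₀ := by ext; simp [Φ₀, or_comm]
    have hinf : (Subgroup.closure (Φ₀ : Set G) : Set G).Infinite :=
      Set.Infinite.mono (Subgroup.closure_mono fun g hg => by simp [Φ₀, hg]) hΦ
    exact ⟨(Φ₀ ^ ·), isThick_pow hsymm, fun k => Finset.one_mem_pow h1,
      exists_card_pow_gt h1 hsymm hinf⟩

end Shapes

def clusterType (n : ℕ) : ℕ := n.unpair.1

theorem infinite_setOf_clusterType_eq (s : ℕ) : {n | clusterType n = s}.Infinite :=
  infinite_of_injective_forall_mem (f := Nat.pair s) (fun i j h => (Nat.pair_eq_pair.1 h).2)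
    fun i => by simp [clusterType]

section Construction

variable [DecidableEq G] [Infinite G] (K E : ℕ → Finset G)

noncomputable def center : ℕ → G
  | n => Classical.choose (Infinite.exists_notMem_finset
      ((Finset.range n).attach.biUnion fun m =>
        (K (clusterType n))⁻¹ * E n * (K (clusterType m) * {center m.1})))
  termination_by n => n
  decreasing_by all_goals exact Finset.mem_range.1 m.2

theorem center_ne {m n : ℕ} (hmn : m < n) {a b g : G} (ha : a ∈ K (clusterType n))
    (hg : g ∈ E n) (hb : b ∈ K (clusterType m)) :
    a * center K E n ≠ g * (b * center K E m) := fun h => by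
  have hspec := Classical.choose_spec (Infinite.exists_notMem_finset
    ((Finset.range n).attach.biUnion fun m =>
      (K (clusterType n))⁻¹ * E n * (K (clusterType m) * {center K E m.1})))
  rw [← center.eq_def] at hspec
  refine hspec (Finset.mem_biUnion.2 ⟨⟨m, Finset.mem_range.2 hmn⟩, Finset.mem_attach _ _, ?_⟩)
  rw [eq_inv_mul_of_mul_eq h, ← mul_assoc a⁻¹]
  exact Finset.mul_mem_mul (Finset.mul_mem_mul (Finset.inv_mem_inv ha) hg)
    (Finset.mul_mem_mul hb (Finset.mem_singleton_self _))

noncomputable def cluster (n : ℕ) : Finset G := K (clusterType n) * {center K E n}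

noncomputable def clusterSet (S : Set ℕ) : Set G := ⋃ n ∈ clusterType ⁻¹' S, (cluster K E n : Set G)

variable {K E}

theorem mem_cluster {n : ℕ} {x : G} :
    x ∈ cluster K E n ↔ x * (center K E n)⁻¹ ∈ K (clusterType n) :=
  mem_mul_singleton

theorem center_mem_cluster (hK1 : ∀ u, (1 : G) ∈ K u) (n : ℕ) : center K E n ∈ cluster K E n :=
  mem_cluster.2 (by simpa using hK1 _)

theorem card_cluster (n : ℕ) : (cluster K E n).card = (K (clusterType n)).card :=
  Finset.card_mul_singleton _ _

theorem exists_separated (hE : Tendsto E atTop atTop) (F : Finset G) :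
    ∃ N, ∀ m n, N ≤ n → m ≠ n →
      ∀ y ∈ cluster K E m, ∀ x ∈ cluster K E n, y * x⁻¹ ∉ insert 1 F := by
  obtain ⟨N, hN⟩ := tendsto_atTop_atTop.1 hE (insert 1 F ∪ (insert 1 F)⁻¹)
  refine ⟨N, fun m n hn hmn y hy x hx hyx => ?_⟩
  rw [mem_cluster] at hx hy
  rcases hmn.lt_or_gt with hlt | hlt
  · refine center_ne K E hlt hx (hN n hn (Finset.mem_union_right _ (Finset.inv_mem_inv hyx))) hy ?_
    group
  · refine center_ne K E hlt hy (hN m (hn.trans hlt.le) (Finset.mem_union_left _ hyx)) hx ?_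
    group

theorem ballIn_clusterSet_subset {S : Set ℕ} {F : Finset G} {n : ℕ} {x : G}
    (hsep : ∀ m, m ≠ n → ∀ y ∈ cluster K E m, ∀ x ∈ cluster K E n, y * x⁻¹ ∉ insert 1 F)
    (hx : x ∈ cluster K E n) : ballIn (clusterSet K E S) F x ⊆ cluster K E n := by
  intro z hz
  obtain ⟨hzx, hzS⟩ := mem_ballIn.1 hz
  obtain ⟨m, -, hzm⟩ := mem_iUnion₂.1 hzS
  obtain rfl | hmn := eq_or_ne m n
  · exact hzm
  · exact absurd hzx (hsep m hmn z hzm x hx)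

theorem hasClustersOfSize_clusterSet (hK1 : ∀ u, (1 : G) ∈ K u) (hE : Tendsto E atTop atTop)
    {S : Set ℕ} {s : ℕ} (hs : s ∈ S) : HasClustersOfSize (clusterSet K E S) 1 (K s).card := by
  refine ⟨K s * (K s)⁻¹, fun Ψ _ => ?_⟩
  obtain ⟨N, hsep⟩ := exists_separated hE Ψ
  have hinj : InjOn (center K E) {n | N ≤ n} := fun m _ n hn hmn => by_contra fun hne =>
    hsep m n hn hne _ (center_mem_cluster hK1 m) _ (center_mem_cluster hK1 n) (by simp [hmn])
  refine (((infinite_setOf_clusterType_eq s).sdiff (finite_Iio N)).image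
    (hinj.mono fun n hn => not_lt.1 (by simpa using hn.2))).mono ?_
  rintro _ ⟨n, ⟨rfl, hnN⟩, rfl⟩
  have hsub : ballIn (clusterSet K E S) Ψ (center K E n) ⊆ cluster K E n :=
    ballIn_clusterSet_subset (hsep · n (not_lt.1 (by simpa using hnN))) (center_mem_cluster hK1 n)
  have hsup : (cluster K E n : Set G) ⊆
      ballIn (clusterSet K E S) (K (clusterType n) * (K (clusterType n))⁻¹) (center K E n) :=
    fun z hz => mem_ballIn.2 ⟨Finset.mem_insert_of_mem (by
      simpa using Finset.mul_mem_mul (mem_cluster.1 hz) (Finset.inv_mem_inv (hK1 _))),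
      mem_biUnion hs hz⟩
  refine ⟨mem_biUnion hs (center_mem_cluster hK1 n), ?_, ?_⟩
  · rw [one_mul, ← card_cluster, ← ncard_coe_finset]
    exact ncard_le_ncard hsup (ballIn_finite _ _ _)
  · rw [one_mul, ← card_cluster, ← ncard_coe_finset]
    exact ncard_le_ncard hsub (Finset.finite_toSet _)

theorem not_hasClustersOfSize_clusterSet (hK : IsScaleSeparated K) (hE : Tendsto E atTop atTop)
    (S : Set ℕ) (lam : ℕ) :
    ∃ s₀, ∀ s, s₀ ≤ s → s ∉ S → ¬ HasClustersOfSize (clusterSet K E S) lam (K s).card := by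
  obtain ⟨s₀, hs₀⟩ := hK lam
  refine ⟨s₀, fun s hs hsS ⟨Φ, hΦ⟩ => ?_⟩
  obtain ⟨D, hD⟩ := hs₀ s hs
  obtain ⟨N, hsep⟩ := exists_separated hE Φ
  refine hΦ (Φ ∪ D) Finset.subset_union_left
    (((finite_Iio N).biUnion fun n _ => (cluster K E n).finite_toSet).subset ?_)
  rintro x ⟨hxS, hlow, hup⟩
  obtain ⟨n, hnS, hxn⟩ := mem_iUnion₂.1 hxS
  refine mem_biUnion (mem_Iio.2 (not_le.1 fun hn => ?_)) hxn
  have hns : clusterType n ≠ s := fun h => hsS (h ▸ hnS)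
  rcases hD _ hns with hsmall | hthick
  · have hball := ncard_le_ncard (ballIn_clusterSet_subset (S := S) (F := Φ) (hsep · n hn) hxn)
      (Finset.finite_toSet _)
    rw [ncard_coe_finset, card_cluster] at hball
    exact (hlow.trans (Nat.mul_le_mul_left lam hball)).not_gt hsmall
  · set a := x * (center K E n)⁻¹
    have hsub : (((D * {a} ∩ K (clusterType n)) * {center K E n} : Finset G) : Set G) ⊆
        ballIn (clusterSet K E S) (Φ ∪ D) x := fun z hz => by
      rw [Finset.mem_coe, mem_mul_singleton, Finset.mem_inter, mem_mul_singleton] at hz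
      refine mem_ballIn.2 ⟨Finset.mem_insert_of_mem (Finset.mem_union_right _ ?_),
        mem_biUnion hnS (mem_cluster.2 hz.2)⟩
      simpa [a, mul_assoc] using hz.1
    have hcard := ncard_le_ncard hsub (ballIn_finite _ _ _)
    rw [ncard_coe_finset, Finset.card_mul_singleton] at hcard
    exact (hthick a (mem_cluster.1 hxn)).not_ge (hcard.trans hup)

theorem finite_diff_of_coarselyEquiv (hK1 : ∀ u, (1 : G) ∈ K u) (hK : IsScaleSeparated K)
    (hE : Tendsto E atTop atTop) {S S' : Set ℕ}
    (h : CoarselyEquiv (clusterSet K E S) (clusterSet K E S')) : (S \ S').Finite := by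
  obtain ⟨k, hk⟩ := h.exists_hasClustersOfSize
  obtain ⟨s₀, hs₀⟩ := not_hasClustersOfSize_clusterSet hK hE S' k
  exact (finite_Iio s₀).subset fun s hs => not_le.1 fun hle =>
    hs₀ s hle hs.2 (hk _ (hasClustersOfSize_clusterSet hK1 hE hs.1))

theorem clusterSet_nonempty (hK1 : ∀ u, (1 : G) ∈ K u) {S : Set ℕ} (hS : S.Nonempty) :
    (clusterSet K E S).Nonempty := by
  obtain ⟨s, hs⟩ := hS
  exact ⟨_, mem_biUnion (x := Nat.pair s 0) (by simpa [clusterType] using hs)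
    (center_mem_cluster hK1 _)⟩

end Construction

theorem exists_almostDisjoint_family :
    ∃ S : (ℕ → Bool) → Set ℕ, (∀ r, (S r).Infinite) ∧ ∀ r r', r ≠ r' → (S r ∩ S r').Finite := by
  let initSeg : (ℕ → Bool) → ℕ → ℕ := fun r n => Encodable.encode (List.ofFn fun i : Fin n => r i)
  have hlen : ∀ {r r' m n}, initSeg r m = initSeg r' n → m = n := fun h => by
    simpa using congrArg List.length (Encodable.encode_injective h)
  refine ⟨fun r => range (initSeg r), fun r => infinite_range_of_injective fun _ _ => hlen,
    fun r r' hr => ?_⟩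
  obtain ⟨d, hd⟩ := Function.ne_iff.1 hr
  refine ((finite_Iic d).image (initSeg r)).subset ?_
  rintro _ ⟨⟨n, rfl⟩, ⟨m, hm⟩⟩
  obtain rfl := hlen hm
  refine mem_image_of_mem _ (mem_Iic.2 (not_lt.1 fun hdm => hd ?_))
  exact (congrFun (List.ofFn_injective (Encodable.encode_injective hm)) ⟨d, hdm⟩).symm

end CoarseClusters

open CoarseClusters

/-- For every countably infinite group `G`, there are `2^ℵ₀` nonempty subsets of `G`
that are pairwise non-coarsely-equivalent. -/
theorem countable_group_continuum_coarse_subsets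
    (G : Type*) [Group G] [Countable G] [Infinite G] :
    ∃ 𝔉 : Set (Set G),
      (∀ A ∈ 𝔉, A.Nonempty) ∧
      Cardinal.mk 𝔉 = 2 ^ Cardinal.aleph0 ∧
      ∀ A ∈ 𝔉, ∀ B ∈ 𝔉, A ≠ B → ¬ CoarselyEquiv A B := by
  classical
  obtain ⟨B, hB, hB1, hunb⟩ := exists_isThick (G := G)
  obtain ⟨K, hK1, hK⟩ := hB.exists_isScaleSeparated hB1 hunb
  obtain ⟨e, he⟩ := exists_surjective_nat G
  have hE : Tendsto (fun n => (Finset.range n).image e) atTop atTop :=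
    (tendsto_finset_image_atTop_atTop (rightInverse_surjInv he)).comp tendsto_finset_range
  obtain ⟨S, hS, hSS⟩ := exists_almostDisjoint_family
  let X : (ℕ → Bool) → Set G := fun r => clusterSet K (fun n => (Finset.range n).image e) (S r)
  have hX : ∀ r r', r ≠ r' → ¬ CoarselyEquiv (X r) (X r') := fun r r' hr h =>
    hS r (((finite_diff_of_coarselyEquiv hK1 hK hE h).union (hSS r r' hr)).subset
      (sdiff_union_inter (S r) (S r')).ge)
  refine ⟨range X, ?_, ?_, ?_⟩
  · rintro _ ⟨r, rfl⟩
    exact clusterSet_nonempty hK1 (hS r).nonempty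
  · have hinj : Injective X := fun r r' h =>
      by_contra fun hr => hX r r' hr (h ▸ CoarselyEquiv.refl _)
    simpa using Cardinal.mk_range_eq_of_injective hinj
  · rintro _ ⟨r, rfl⟩ _ ⟨r', rfl⟩ hne
    exact hX r r' fun h => hne (h ▸ rfl)
end

section
/- There exists a family 𝔉 of subsets of ℕ with |𝔉| = 2^ℵ₀ such that any two distinct members of 𝔉 are not coarsely equivalent as subsets of ℕ with the metric d(x,y) = |x − y|. -/
/-- `Y` is a large subset of `X ⊆ ℕ` with respect to the metric `|x - y|`. -/
def NatLargeIn (Y X : Set ℕ) : Prop :=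
  Y ⊆ X ∧ ∃ r : ℕ, ∀ x ∈ X, ∃ y ∈ Y, Nat.dist x y ≤ r

/-- A bijection `f : X ≃ X'` between subsets of `ℕ` (with the metric `|x - y|`)
is an asymorphism if it is coarse in both directions. -/
def NatIsAsymorphism (X X' : Set ℕ) (f : X ≃ X') : Prop :=
  (∀ r : ℕ, ∃ t : ℕ, ∀ x y : X,
      Nat.dist (x : ℕ) (y : ℕ) ≤ r → Nat.dist (f x : ℕ) (f y : ℕ) ≤ t) ∧
  (∀ r : ℕ, ∃ t : ℕ, ∀ x y : X',
      Nat.dist (x : ℕ) (y : ℕ) ≤ r → Nat.dist (f.symm x : ℕ) (f.symm y : ℕ) ≤ t)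

/-- Subsets `X, X'` of `ℕ` are coarsely equivalent if some large subsets of each
are asymorphic. -/
def NatCoarselyEquiv (X X' : Set ℕ) : Prop :=
  ∃ Y Y' : Set ℕ, NatLargeIn Y X ∧ NatLargeIn Y' X' ∧ ∃ f : Y ≃ Y', NatIsAsymorphism Y Y' f

/-!
Put blocks `[s n, 2 s n)` at the doubly exponential positions `s n = 2 ^ 2 ^ (n + 1)`, so that
`s (n + 1) = s n ^ 2`, and let `X S` be the union of the blocks indexed by `S ⊆ ℕ`.  Far out, a
coarse equivalence `X S ≈ X T` must map (a large subset of) each block of `X S` into a single block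
of `X T`, since distinct blocks are far apart compared with their sizes and a large subset of a
block is chained at a bounded scale.  Counting points, the sizes of corresponding blocks then
agree up to a multiplicative constant, which for `s m ^ 2 ≤ s n` forces the blocks to be the same:
eventually `n ∈ S → n ∈ T`.  Composing with `n ↦ (Nat.unpair n).1` turns any two distinct subsets
of `ℕ` into sets `S, T` differing at infinitely many places, whence `2 ^ ℵ₀` pairwise
non-equivalent sets.
-/

open Filter Set
open scoped Finset

theorem NatCoarselyEquiv.refl (X : Set ℕ) : NatCoarselyEquiv X X :=
  have hX : NatLargeIn X X := ⟨subset_rfl, 0, fun x hx => ⟨x, hx, by simp [Nat.dist]⟩⟩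
  ⟨X, X, hX, hX, Equiv.refl X, fun r => ⟨r, fun _ _ h => h⟩, fun r => ⟨r, fun _ _ h => h⟩⟩

theorem NatCoarselyEquiv.symm {X X' : Set ℕ} (h : NatCoarselyEquiv X X') :
    NatCoarselyEquiv X' X := by
  obtain ⟨Y, Y', hY, hY', f, hf, hf'⟩ := h
  exact ⟨Y', Y, hY', hY, f.symm, hf', by simpa using hf⟩

def GapsLE (Z : Set ℕ) (s : ℕ) : Prop :=
  ∀ y ∈ Z, ∀ z ∈ Z, y + s < z → ∃ w ∈ Z, y < w ∧ w ≤ y + s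

theorem GapsLE.iff_of_forall {Z : Set ℕ} {s : ℕ} (hZ : GapsLE Z s) {P : ℕ → Prop}
    (hP : ∀ y ∈ Z, ∀ w ∈ Z, y < w → w ≤ y + s → (P y ↔ P w)) {y z : ℕ} (hy : y ∈ Z)
    (hz : z ∈ Z) : P y ↔ P z := by
  wlog hyz : y ≤ z generalizing y z
  · exact (this hz hy (by omega)).symm
  induction h : z - y using Nat.strong_induction_on generalizing y with
  | _ d ih =>
    rcases hyz.eq_or_lt with rfl | hlt
    · rfl
    by_cases hclose : z ≤ y + s
    · exact hP y hy z hz hlt hclose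
    obtain ⟨w, hw, hyw, hws⟩ := hZ y hy z hz (by omega)
    exact (hP y hy w hw hyw hws).trans (ih (z - w) (by omega) hw (by omega) rfl)

theorem gapsLE_inter_Ico {Y : Set ℕ} {a b r : ℕ}
    (h : ∀ x ∈ Ico a b, ∃ y ∈ Y ∩ Ico a b, Nat.dist x y ≤ r) :
    GapsLE (Y ∩ Ico a b) (2 * r + 1) := by
  intro y hy z hz hyz
  obtain ⟨w, hw, hd⟩ := h (y + r + 1) ⟨by grind, by grind⟩
  exact ⟨w, hw, by grind [Nat.dist], by grind [Nat.dist]⟩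

theorem Finset.card_le_mul_card_of_forall_dist_le {I A : Finset ℕ} {r : ℕ}
    (h : ∀ x ∈ I, ∃ y ∈ A, Nat.dist x y ≤ r) : #I ≤ (2 * r + 1) * #A := by
  calc #I ≤ #(A.biUnion fun y => Finset.Icc (y - r) (y + r)) := by
        refine Finset.card_le_card fun x hx => ?_
        obtain ⟨y, hy, hxy⟩ := h x hx
        exact Finset.mem_biUnion.2 ⟨y, hy, Finset.mem_Icc.2 (by grind [Nat.dist])⟩
    _ ≤ ∑ y ∈ A, #(Finset.Icc (y - r) (y + r)) := Finset.card_biUnion_le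
    _ ≤ ∑ _y ∈ A, (2 * r + 1) := Finset.sum_le_sum fun y _ => by simp only [Nat.card_Icc]; omega
    _ = (2 * r + 1) * #A := by rw [Finset.sum_const, smul_eq_mul, mul_comm]

theorem Finset.exists_le_apply_of_lt_card {A : Finset ℕ} {g : ℕ → ℕ} (hg : InjOn g A) {k : ℕ}
    (hk : k < #A) : ∃ x ∈ A, k ≤ g x := by
  by_contra! h
  have := Finset.card_le_card_of_injOn g (t := Finset.range k)
    (fun x hx => Finset.mem_range.2 (h x hx)) hg
  simp only [Finset.card_range] at this
  omega

theorem exists_injOn_eq_equiv {α β : Type*} [Nonempty β] {s : Set α} {t : Set β} (f : s ≃ t) :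
    ∃ g : α → β, InjOn g s ∧ ∀ x : s, g x = f x := by
  have hg : ∀ x : s, Function.extend (↑) (fun x => (f x : β)) (fun _ => Classical.ofNonempty) (x : α)
      = f x := Subtype.val_injective.extend_apply _ _
  refine ⟨_, fun x hx y hy hxy => ?_, hg⟩
  rw [hg ⟨x, hx⟩, hg ⟨y, hy⟩] at hxy
  exact congrArg Subtype.val (f.injective (Subtype.ext hxy))

def scale (n : ℕ) : ℕ := 2 ^ 2 ^ (n + 1)

def block (n : ℕ) : Set ℕ := Ico (scale n) (2 * scale n)

def blockUnion (S : Set ℕ) : Set ℕ := ⋃ n ∈ S, block n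

theorem mem_blockUnion {S : Set ℕ} {x : ℕ} : x ∈ blockUnion S ↔ ∃ n ∈ S, x ∈ block n := by
  simp [blockUnion]

theorem scale_succ (n : ℕ) : scale (n + 1) = scale n ^ 2 := by
  simp only [scale, ← pow_mul, pow_succ 2 (n + 1)]

theorem four_le_scale (n : ℕ) : 4 ≤ scale n :=
  calc 4 = 2 ^ 2 ^ 1 := rfl
    _ ≤ scale n := Nat.pow_le_pow_right two_pos (Nat.pow_le_pow_right two_pos (by omega))

theorem scale_strictMono : StrictMono scale :=
  strictMono_nat_of_lt_succ fun n => by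
    rw [scale_succ]
    exact lt_self_pow₀ (by linarith [four_le_scale n]) one_lt_two

theorem eventually_lt_scale (k : ℕ) : ∀ᶠ n in atTop, k < scale n :=
  scale_strictMono.tendsto_atTop.eventually_gt_atTop k

theorem sq_scale_le {m n : ℕ} (h : m < n) : scale m ^ 2 ≤ scale n :=
  scale_succ m ▸ scale_strictMono.monotone h

theorem four_mul_scale_le {m n : ℕ} (h : m < n) : 4 * scale m ≤ scale n :=
  calc 4 * scale m ≤ scale m ^ 2 := by rw [sq]; exact Nat.mul_le_mul_right _ (four_le_scale m)
    _ ≤ scale n := sq_scale_le h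

theorem scale_le_of_lt_of_scale_le_mul {m n C : ℕ} (h : n < m) (hC : scale m ≤ C * scale n) :
    scale n ≤ C :=
  Nat.le_of_mul_le_mul_right (by rw [← sq]; exact (sq_scale_le h).trans hC)
    (by linarith [four_le_scale n])

theorem eq_of_scale_le_mul {m n C C' : ℕ} (h : scale n ≤ C * scale m)
    (h' : scale m ≤ C' * scale n) (hC : C < scale m) (hC' : C' < scale n) : n = m := by
  rcases lt_trichotomy n m with hnm | rfl | hmn
  · exact absurd (scale_le_of_lt_of_scale_le_mul hnm h') (not_le.2 hC')
  · rfl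
  · exact absurd (scale_le_of_lt_of_scale_le_mul hmn h) (not_le.2 hC)

theorem scale_mem_block (n : ℕ) : scale n ∈ block n :=
  ⟨le_rfl, by linarith [four_le_scale n]⟩

theorem scale_le_two_mul_dist {k n x y : ℕ} (hkn : k ≠ n) (hx : x ∈ block n)
    (hy : y ∈ block k) : scale n ≤ 2 * Nat.dist x y := by
  obtain ⟨hx₁, hx₂⟩ := hx
  obtain ⟨hy₁, hy₂⟩ := hy
  rcases hkn.lt_or_gt with h | h
  · have := four_mul_scale_le h
    simp only [Nat.dist]
    omega
  · have := four_mul_scale_le h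
    simp only [Nat.dist]
    omega

theorem block_eq_of_mem {m n x : ℕ} (hm : x ∈ block m) (hn : x ∈ block n) : m = n := by
  by_contra h
  have := scale_le_two_mul_dist h hn hm
  simp only [Nat.dist_self, mul_zero, nonpos_iff_eq_zero] at this
  linarith [four_le_scale n]

theorem mem_of_mem_block_of_mem_blockUnion {T : Set ℕ} {m x : ℕ} (hm : x ∈ block m)
    (hT : x ∈ blockUnion T) : m ∈ T := by
  obtain ⟨k, hk, hxk⟩ := mem_blockUnion.1 hT
  exact block_eq_of_mem hxk hm ▸ hk

theorem mem_block_of_dist_le {T : Set ℕ} {n r x y : ℕ} (hx : x ∈ block n)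
    (hy : y ∈ blockUnion T) (hxy : Nat.dist x y ≤ r) (hr : 2 * r < scale n) : y ∈ block n := by
  obtain ⟨k, -, hyk⟩ := mem_blockUnion.1 hy
  obtain rfl : k = n := by
    by_contra h
    linarith [scale_le_two_mul_dist h hx hyk]
  exact hyk

theorem exists_mem_block_dist_le {S Y : Set ℕ} {n r x : ℕ} (hYS : Y ⊆ blockUnion S)
    (hY : ∀ x ∈ blockUnion S, ∃ y ∈ Y, Nat.dist x y ≤ r) (hn : n ∈ S) (hr : 2 * r < scale n)
    (hx : x ∈ block n) : ∃ y ∈ Y ∩ block n, Nat.dist x y ≤ r := by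
  obtain ⟨y, hy, hxy⟩ := hY x (mem_blockUnion.2 ⟨n, hn, hx⟩)
  exact ⟨y, ⟨hy, mem_block_of_dist_le hx (hYS hy) hxy hr⟩, hxy⟩

theorem eventually_exists_mem_block {S Y : Set ℕ} (hY : NatLargeIn Y (blockUnion S)) :
    ∀ᶠ n in atTop, n ∈ S → ∃ y : Y, (y : ℕ) ∈ block n := by
  obtain ⟨hYS, r, hr⟩ := hY
  filter_upwards [eventually_lt_scale (2 * r)] with n hrn hn
  obtain ⟨y, ⟨hy, hyn⟩, -⟩ := exists_mem_block_dist_le hYS hr hn hrn (scale_mem_block n)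
  exact ⟨⟨y, hy⟩, hyn⟩

-- A block of scale `> 2 t` is more than `t` away from the other blocks.
theorem mapsTo_block_of_gapsLE {T Z : Set ℕ} {g : ℕ → ℕ} {s t m x₀ : ℕ} (hZ : GapsLE Z s)
    (hg : MapsTo g Z (blockUnion T))
    (hgZ : ∀ x ∈ Z, ∀ y ∈ Z, Nat.dist x y ≤ s → Nat.dist (g x) (g y) ≤ t)
    (hm : 2 * t < scale m) (hx₀ : x₀ ∈ Z) (hgx₀ : g x₀ ∈ block m) : MapsTo g Z (block m) := by
  refine fun x hx => (hZ.iff_of_forall (P := (g · ∈ block m)) (fun y hy w hw hyw hws => ?_)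
    hx₀ hx).1 hgx₀
  have hd := hgZ y hy w hw (by simp only [Nat.dist]; omega)
  exact ⟨fun h => mem_block_of_dist_le h (hg hw) hd hm,
    fun h => mem_block_of_dist_le h (hg hy) (Nat.dist_comm (g y) (g w) ▸ hd) hm⟩

theorem exists_eventually_mapsTo_block {S T Y Y' : Set ℕ} (hY : NatLargeIn Y (blockUnion S))
    (hY' : Y' ⊆ blockUnion T) (f : Y ≃ Y')
    (hf : ∀ r : ℕ, ∃ t : ℕ, ∀ x y : Y,
      Nat.dist (x : ℕ) (y : ℕ) ≤ r → Nat.dist (f x : ℕ) (f y : ℕ) ≤ t) :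
    ∃ C, ∀ᶠ n in atTop, n ∈ S →
      ∃ m, scale n ≤ C * scale m ∧ ∀ y : Y, (y : ℕ) ∈ block n → (f y : ℕ) ∈ block m := by
  classical
  obtain ⟨hYS, r, hr⟩ := hY
  obtain ⟨t, ht⟩ := hf (2 * r + 1)
  obtain ⟨g, hg_inj, hg⟩ := exists_injOn_eq_equiv f
  have hgY : MapsTo g Y (blockUnion T) := fun x hx => hY' (by rw [hg ⟨x, hx⟩]; exact (f _).2)
  refine ⟨2 * r + 1, ?_⟩
  filter_upwards [eventually_lt_scale (2 * r), eventually_lt_scale ((2 * r + 1) * (4 * t))]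
    with n hrn htn hn
  set A := {x ∈ Finset.Ico (scale n) (2 * scale n) | x ∈ Y} with hA
  have hA_coe : (A : Set ℕ) = Y ∩ block n := by ext; simp [hA, block]; tauto
  have hdense : ∀ x ∈ block n, ∃ y ∈ Y ∩ block n, Nat.dist x y ≤ r :=
    fun x => exists_mem_block_dist_le hYS hr hn hrn
  have hcard : scale n ≤ (2 * r + 1) * #A := by
    have := Finset.card_le_mul_card_of_forall_dist_le (I := Finset.Ico (scale n) (2 * scale n))
      (A := A) (r := r) fun x hx => by
        simpa [← Finset.mem_coe, hA_coe] using hdense x (by simpa [block] using hx)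
    simpa [two_mul] using this
  have hgA : InjOn g A := hg_inj.mono (by simp [hA_coe])
  obtain ⟨x₀, hx₀, htx₀⟩ := Finset.exists_le_apply_of_lt_card hgA
    (Nat.lt_of_mul_lt_mul_left (htn.trans_le hcard))
  rw [← Finset.mem_coe, hA_coe] at hx₀
  obtain ⟨m, -, hx₀m⟩ := mem_blockUnion.1 (hgY hx₀.1)
  have hmaps : MapsTo g (Y ∩ block n) (block m) := by
    refine mapsTo_block_of_gapsLE (t := t) (gapsLE_inter_Ico hdense) (hgY.mono inter_subset_left subset_rfl)
      (fun x hx y hy hxy => ?_) (by have := hx₀m.2; omega) hx₀ hx₀m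
    rw [hg ⟨x, hx.1⟩, hg ⟨y, hy.1⟩]
    exact ht ⟨x, hx.1⟩ ⟨y, hy.1⟩ hxy
  refine ⟨m, hcard.trans (Nat.mul_le_mul_left _ ?_), fun y hy => hg y ▸ hmaps ⟨y.2, hy⟩⟩
  have := Finset.card_le_card_of_injOn g (t := Finset.Ico (scale m) (2 * scale m))
    (fun x hx => by simpa [block] using hmaps (hA_coe ▸ hx)) hgA
  simpa [two_mul] using this

theorem eventually_mem_of_natCoarselyEquiv {S T : Set ℕ}
    (h : NatCoarselyEquiv (blockUnion S) (blockUnion T)) : ∀ᶠ n in atTop, n ∈ S → n ∈ T := by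
  obtain ⟨Y, Y', hY, hY', f, hf, hf'⟩ := h
  obtain ⟨C, hC⟩ := exists_eventually_mapsTo_block hY hY'.1 f hf
  obtain ⟨C', hC'⟩ := exists_eventually_mapsTo_block hY' hY.1 f.symm (by simpa using hf')
  obtain ⟨M, hM⟩ := eventually_atTop.1 (hC'.and (eventually_lt_scale C))
  filter_upwards [hC, eventually_exists_mem_block hY, eventually_lt_scale C',
    eventually_lt_scale (C * scale M)] with n hn hne hC'n hMn hnS
  obtain ⟨y, hy⟩ := hne hnS
  obtain ⟨m, hnm, hmaps⟩ := hn hnS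
  have hMm : M ≤ m :=
    (scale_strictMono.lt_iff_lt.1 (lt_of_mul_lt_mul_left (hMn.trans_le hnm) (Nat.zero_le C))).le
  have hmT := mem_of_mem_block_of_mem_blockUnion (hmaps y hy) (hY'.1 (f y).2)
  obtain ⟨n', hmn', hmaps'⟩ := (hM m hMm).1 hmT
  obtain rfl : n = n' := block_eq_of_mem hy (by simpa using hmaps' (f y) (hmaps y hy))
  obtain rfl : n = m := eq_of_scale_le_mul hnm hmn' (hM m hMm).2 hC'n
  exact hmT

theorem not_natCoarselyEquiv_of_frequently {S T : Set ℕ}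
    (h : ∃ᶠ n in atTop, n ∈ S ∧ n ∉ T) : ¬ NatCoarselyEquiv (blockUnion S) (blockUnion T) :=
  fun hST =>
    let ⟨_, ⟨hS, hT⟩, hST⟩ := (h.and_eventually (eventually_mem_of_natCoarselyEquiv hST)).exists
    hT (hST hS)

theorem frequently_unpair_fst_mem_and_not_mem {a b : Set ℕ} {k : ℕ} (ha : k ∈ a) (hb : k ∉ b) :
    ∃ᶠ n in atTop, (Nat.unpair n).1 ∈ a ∧ (Nat.unpair n).1 ∉ b :=
  frequently_atTop.2 fun N => ⟨Nat.pair k N, Nat.right_le_pair k N, by simp [ha, hb]⟩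

/-- There are `2^ℵ₀` subsets of `ℕ` that are pairwise non-coarsely-equivalent
with respect to the metric `|x - y|`. -/
theorem nat_continuum_coarse_subsets :
    ∃ 𝔉 : Set (Set ℕ),
      Cardinal.mk 𝔉 = 2 ^ Cardinal.aleph0 ∧
      ∀ A ∈ 𝔉, ∀ B ∈ 𝔉, A ≠ B → ¬ NatCoarselyEquiv A B := by
  set F : Set ℕ → Set ℕ := fun a => blockUnion {n | (Nat.unpair n).1 ∈ a}
  have hF : ∀ a b, a ≠ b → ¬ NatCoarselyEquiv (F a) (F b) := by
    intro a b hab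
    obtain ⟨k, hk⟩ := Set.symmDiff_nonempty.2 hab
    rcases Set.mem_symmDiff.1 hk with ⟨ha, hb⟩ | ⟨hb, ha⟩
    · exact not_natCoarselyEquiv_of_frequently (frequently_unpair_fst_mem_and_not_mem ha hb)
    · exact fun h => not_natCoarselyEquiv_of_frequently
        (frequently_unpair_fst_mem_and_not_mem hb ha) h.symm
  have hF_inj : Function.Injective F := fun a b hab =>
    by_contra fun h => hF a b h (hab ▸ NatCoarselyEquiv.refl (F a))
  refine ⟨range F, ?_, ?_⟩
  · rw [Cardinal.mk_range_eq F hF_inj, Cardinal.mk_set, Cardinal.mk_nat]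
  · rintro _ ⟨a, rfl⟩ _ ⟨b, rfl⟩ hab
    exact hF a b fun h => hab (h ▸ rfl)
end

section
/- Let a, b : ℕ → ℕ satisfy 1 ≤ a_n ≤ b_n < a_{n+1} and b_n − a_n > n·a_n for all n, and for W ⊆ ℕ set I_W = ⋃_{n∈W} [a_n, b_n] (intervals of integers). If W and W′ are infinite subsets of ℕ with W ∩ W′ finite and W ≠ W′, then I_W and I_{W′} are not coarsely equivalent as subsets of ℕ with the metric d(x,y) = |x − y|. -/
/-!
Let `Y ⊆ I_W`, `Y' ⊆ I_{W'}` be `r`- and `r'`-dense and `f : Y ≃ Y'` an asymorphism. Take a large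
`n ∈ W \ W'` and let `p > n` be the first index missing from `W`. The points of `Y` in `I_n` are
about `|I_n| / (2r + 1)` many and `f` is injective, so its largest value on them lies in some
`I_M`, `M ∈ W'`, with `b_M ≳ |I_n| / (2r + 1)`. Conversely `f⁻¹` moves the `r'`-dense points of
`Y'` in `I_M` by bounded steps from a point below `a_p`, and such steps cannot jump over the gap
of length `> p` that the missing `I_p` leaves in `I_W`; so all of them land below `a_p` and
`|I_M| ≲ (2r' + 1) a_p`. The growth `b_k - a_k > k a_k` excludes `M < n` by the first bound and
`M ≥ p` by the second, and `n ≤ M < p` would put `M` in `W ∩ W'`.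
-/

open Set

lemma Equiv.exists_mapsTo_invOn {α β : Type*} [Nonempty α] [Nonempty β] {s : Set α} {t : Set β}
    (e : s ≃ t) : ∃ (f : α → β) (g : β → α),
      MapsTo f s t ∧ MapsTo g t s ∧ InvOn g f s t ∧ ∀ y : t, g y = e.symm y := by
  set f := Function.extend Subtype.val (fun x : s => (e x : β)) fun _ => Classical.arbitrary β
  set g := Function.extend Subtype.val (fun y : t => (e.symm y : α)) fun _ => Classical.arbitrary α
  have hf : ∀ x : s, f x = e x := Subtype.val_injective.extend_apply _ _
  have hg : ∀ y : t, g y = e.symm y := Subtype.val_injective.extend_apply _ _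
  refine ⟨f, g, fun x hx => ?_, fun y hy => ?_, ⟨fun x hx => ?_, fun y hy => ?_⟩, hg⟩
  · simpa only [hf ⟨x, hx⟩] using (e ⟨x, hx⟩).2
  · simpa only [hg ⟨y, hy⟩] using (e.symm ⟨y, hy⟩).2
  · rw [hf ⟨x, hx⟩, hg (e ⟨x, hx⟩), e.symm_apply_apply]
  · rw [hg ⟨y, hy⟩, hf (e.symm ⟨y, hy⟩), e.apply_symm_apply]

lemma NatIsAsymorphism.exists_invOn {Y Y' : Set ℕ} {f : Y ≃ Y'} (hf : NatIsAsymorphism Y Y' f) :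
    ∃ F G : ℕ → ℕ, MapsTo F Y Y' ∧ MapsTo G Y' Y ∧ InvOn G F Y Y' ∧
      ∀ r, ∃ t, ∀ u ∈ Y', ∀ v ∈ Y', Nat.dist u v ≤ r → Nat.dist (G u) (G v) ≤ t := by
  obtain ⟨F, G, hF, hG, hGF, hfG⟩ := f.exists_mapsTo_invOn
  refine ⟨F, G, hF, hG, hGF, fun r => ?_⟩
  obtain ⟨t, ht⟩ := hf.2 r
  exact ⟨t, fun u hu v hv huv => by simpa only [← hfG] using ht ⟨u, hu⟩ ⟨v, hv⟩ huv⟩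

namespace Nat

lemma le_ncard_of_dense_Icc {Z : Set ℕ} {ρ A B : ℕ}
    (hZ : ∀ x ∈ Icc A B, ∃ z ∈ Z, Nat.dist x z ≤ ρ) :
    B + 1 ≤ A + 2 * ρ + (2 * ρ + 1) * (Z ∩ Icc A B).ncard := by
  classical
  have hfin : (Z ∩ Icc A B).Finite := (finite_Icc A B).subset inter_subset_right
  rw [ncard_eq_toFinset_card _ hfin]
  set S := hfin.toFinset
  have hcover : Finset.Icc (A + ρ) (B - ρ) ⊆ S.biUnion fun z => Finset.Icc (z - ρ) (z + ρ) := by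
    intro x hx
    rw [Finset.mem_Icc] at hx
    obtain ⟨z, hz, hxz⟩ := hZ x ⟨by omega, by omega⟩
    unfold Nat.dist at hxz
    simp only [Finset.mem_biUnion, Finset.mem_Icc, S, Finite.mem_toFinset, mem_inter_iff, mem_Icc]
    exact ⟨z, ⟨hz, by omega, by omega⟩, by omega, by omega⟩
  have hcard := (Finset.card_le_card hcover).trans
    (Finset.card_biUnion_le_card_mul S _ (2 * ρ + 1) fun z _ => by rw [Nat.card_Icc]; omega)
  rw [Nat.card_Icc, mul_comm] at hcard
  omega

lemma forall_of_dense_Icc_of_step {Z : Set ℕ} {ρ A B z₀ : ℕ} {P : ℕ → Prop}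
    (hZ : ∀ x ∈ Icc A B, ∃ z ∈ Z, Nat.dist x z ≤ ρ) (hz₀ : z₀ ∈ Z ∩ Icc A B) (h₀ : P z₀)
    (hstep : ∀ u ∈ Z ∩ Icc A B, ∀ v ∈ Z ∩ Icc A B, Nat.dist u v ≤ 2 * ρ + 1 → P u → P v) :
    ∀ z ∈ Z ∩ Icc A B, P z := by
  intro z hz
  induction hd : Nat.dist z₀ z using Nat.strong_induction_on generalizing z with
  | _ d ih =>
  by_cases hnear : Nat.dist z₀ z ≤ 2 * ρ + 1
  · exact hstep z₀ hz₀ z hz hnear h₀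
  -- step back by `ρ + 1` towards `z₀` and pick a nearby point of `Z`
  obtain ⟨hz₀Z, hz₀A, hz₀B⟩ := hz₀
  obtain ⟨hzZ, hzA, hzB⟩ := hz
  unfold Nat.dist at hnear hd
  obtain ⟨x, hx, hxz⟩ : ∃ x ∈ Icc A B, Nat.dist x z = ρ + 1 ∧ Nat.dist z₀ x + ρ + 1 = d := by
    rcases le_total z₀ z with h | h
    · exact ⟨z - (ρ + 1), ⟨by omega, by omega⟩, by unfold Nat.dist; omega⟩
    · exact ⟨z + (ρ + 1), ⟨by omega, by omega⟩, by unfold Nat.dist; omega⟩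
  obtain ⟨w, hwZ, hxw⟩ := hZ x hx
  unfold Nat.dist at hxz hxw
  have hw : w ∈ Z ∩ Icc A B := ⟨hwZ, by omega, by omega⟩
  exact hstep w hw z ⟨hzZ, hzA, hzB⟩ (by unfold Nat.dist; omega)
    (ih _ (by unfold Nat.dist; omega) w hw rfl)

end Nat

lemma Set.exists_ncard_le_succ_apply {α : Type*} {s : Set α} (hs : s.Finite) (hne : s.Nonempty)
    {f : α → ℕ} (hf : InjOn f s) : ∃ x ∈ s, s.ncard ≤ f x + 1 := by
  obtain ⟨x, hx, hmax⟩ := s.exists_max_image f hs hne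
  refine ⟨x, hx, ?_⟩
  simpa using ncard_le_ncard_of_injOn f (fun y hy => mem_Iio.2 (Nat.lt_succ_of_le (hmax y hy)))
    hf (finite_Iio (f x + 1))

lemma Set.exists_Ico_subset_sdiff {W W' : Set ℕ} (hW : W.Infinite) (hW' : W'.Infinite)
    (had : (W ∩ W').Finite) (N : ℕ) : ∃ n p, N < n ∧ n < p ∧ p ∉ W ∧ Ico n p ⊆ W \ W' := by
  classical
  obtain ⟨c, hc⟩ := had.bddAbove
  have hnotMem : ∀ k ∈ W, c < k → k ∉ W' := fun k hkW hck hkW' => (hc ⟨hkW, hkW'⟩).not_gt hck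
  obtain ⟨n, hnW, hn⟩ := hW.exists_gt (N + c)
  have hgap : ∃ k, n < k ∧ k ∉ W := by
    obtain ⟨k, hkW', hnk⟩ := hW'.exists_gt n
    exact ⟨k, hnk, fun hkW => hnotMem k hkW (by omega) hkW'⟩
  obtain ⟨hnp, hpW⟩ := Nat.find_spec hgap
  refine ⟨n, Nat.find hgap, by omega, hnp, hpW, fun k ⟨hnk, hkp⟩ => ?_⟩
  have hkW : k ∈ W := by
    rcases hnk.eq_or_lt with rfl | hnk
    · exact hnW
    · exact not_not.1 fun hkW => Nat.find_min hgap hkp ⟨hnk, hkW⟩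
  exact ⟨hkW, hnotMem k hkW (by omega)⟩

lemma exists_apply_mem_Icc_of_dense_Icc {a b : ℕ → ℕ} {W Y : Set ℕ} {F : ℕ → ℕ} {ρ A B : ℕ}
    (hY : ∀ x ∈ Icc A B, ∃ y ∈ Y, Nat.dist x y ≤ ρ) (hAB : A + 2 * ρ ≤ B)
    (hF : MapsTo F Y (⋃ m ∈ W, Icc (a m) (b m))) (hFinj : InjOn F Y) :
    ∃ y ∈ Y ∩ Icc A B, ∃ m ∈ W, F y ∈ Icc (a m) (b m) ∧
      B + 1 ≤ A + 2 * ρ + (2 * ρ + 1) * (b m + 1) := by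
  have hcount := Nat.le_ncard_of_dense_Icc hY
  obtain ⟨y, hy, hcard⟩ := exists_ncard_le_succ_apply
    ((finite_Icc A B).subset inter_subset_right)
    (nonempty_of_ncard_ne_zero fun h0 => by rw [h0] at hcount; omega)
    (hFinj.mono inter_subset_left)
  obtain ⟨m, hmW, hym⟩ := mem_iUnion₂.1 (hF hy.1)
  exact ⟨y, hy, m, hmW, hym, hcount.trans (by have := hym.2; gcongr; omega)⟩

structure GrowingIntervals (a b : ℕ → ℕ) : Prop where
  a_le_b : ∀ n, a n ≤ b n
  b_lt_a_succ : ∀ n, b n < a (n + 1)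
  mul_a_lt_sub : ∀ n, b n - a n > n * a n

namespace GrowingIntervals

variable {a b : ℕ → ℕ} (h : GrowingIntervals a b)
include h

lemma a_strictMono : StrictMono a :=
  strictMono_nat_of_lt_succ fun n => (h.a_le_b n).trans_lt (h.b_lt_a_succ n)

lemma b_lt_a {j k : ℕ} (hjk : j < k) : b j < a k :=
  (h.b_lt_a_succ j).trans_le (h.a_strictMono.monotone hjk)

lemma a_add_mul_lt_b (n : ℕ) : a n + n * a n < b n := by
  have := h.mul_a_lt_sub n
  have := h.a_le_b n
  omega

lemma a_add_lt_b (n : ℕ) : a n + n < b n := by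
  have : n ≤ n * a n := (Nat.le_mul_self n).trans (Nat.mul_le_mul_left n h.a_strictMono.le_apply)
  have := h.a_add_mul_lt_b n
  omega

lemma lt_a_of_dist_le {W : Set ℕ} {p V z z' : ℕ} (hp : p ∉ W) (hVp : V < p) (hz : z < a p)
    (hz' : z' ∈ ⋃ k ∈ W, Icc (a k) (b k)) (hzz' : Nat.dist z z' ≤ V) : z' < a p := by
  obtain ⟨k, hkW, hak, hkb⟩ := mem_iUnion₂.1 hz'
  rcases lt_trichotomy k p with hkp | rfl | hpk
  · exact hkb.trans_lt (h.b_lt_a hkp)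
  · exact absurd hkW hp
  · have := h.b_lt_a hpk
    have := h.a_add_lt_b p
    unfold Nat.dist at hzz'
    omega

lemma le_four_mul_of_b_le {k m ρ : ℕ} (hkm : k ≤ m)
    (hb : b m + 1 ≤ a m + 2 * ρ + (2 * ρ + 1) * a k) : k ≤ 4 * ρ := by
  by_contra! hk
  have hak : k ≤ a k := h.a_strictMono.le_apply
  have : k * a k ≤ m * a m := Nat.mul_le_mul hkm (h.a_strictMono.monotone hkm)
  have := h.a_add_mul_lt_b m
  nlinarith

/-- A coarse injection cannot carry the bounded-step chains through `Y ∩ [A, B]` across the gap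
left by the missing interval `I_p`. -/
lemma add_one_le_of_coarse {W Y : Set ℕ} {g : ℕ → ℕ} {ρ V p A B z₀ : ℕ} (hp : p ∉ W) (hVp : V < p)
    (hg : MapsTo g Y (⋃ k ∈ W, Icc (a k) (b k))) (hginj : InjOn g Y)
    (hgV : ∀ u ∈ Y, ∀ v ∈ Y, Nat.dist u v ≤ 2 * ρ + 1 → Nat.dist (g u) (g v) ≤ V)
    (hY : ∀ x ∈ Icc A B, ∃ y ∈ Y, Nat.dist x y ≤ ρ) (hz₀ : z₀ ∈ Y ∩ Icc A B)
    (hgz₀ : g z₀ < a p) : B + 1 ≤ A + 2 * ρ + (2 * ρ + 1) * a p := by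
  have hmaps : MapsTo g (Y ∩ Icc A B) (Iio (a p)) :=
    Nat.forall_of_dense_Icc_of_step hY hz₀ hgz₀ fun u hu v hv huv hgu =>
      h.lt_a_of_dist_le hp hVp hgu (hg hv.1) (hgV u hu.1 v hv.1 huv)
  have hcard : (Y ∩ Icc A B).ncard ≤ a p := by
    simpa using ncard_le_ncard_of_injOn g hmaps (hginj.mono inter_subset_left) (finite_Iio _)
  exact (Nat.le_ncard_of_dense_Icc hY).trans (by gcongr)

end GrowingIntervals

theorem interval_unions_not_coarsely_equiv_general
    (a b : ℕ → ℕ)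
    (hab : ∀ n, a n ≤ b n) (hba : ∀ n, b n < a (n + 1))
    (hgrow : ∀ n, b n - a n > n * a n)
    (W W' : Set ℕ) (hW : W.Infinite) (hW' : W'.Infinite)
    (had : (W ∩ W').Finite) :
    ¬ NatCoarselyEquiv (⋃ n ∈ W, Set.Icc (a n) (b n)) (⋃ n ∈ W', Set.Icc (a n) (b n)) := by
  rintro ⟨Y, Y', ⟨hYX, r, hY⟩, ⟨hY'X', r', hY'⟩, f, hf⟩
  have h : GrowingIntervals a b := ⟨hab, hba, hgrow⟩
  obtain ⟨F, G, hF, hG, hGF, hGcoarse⟩ := hf.exists_invOn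
  obtain ⟨V, hV⟩ := hGcoarse (2 * r' + 1)
  obtain ⟨n, p, hn, hnp, hpW, hrun⟩ := exists_Ico_subset_sdiff hW hW' had (V + 4 * r + 4 * r')
  obtain ⟨y, ⟨hyY, hyn⟩, M, hMW', hyM, hbn⟩ := exists_apply_mem_Icc_of_dense_Icc
    (fun x hx => hY x (mem_biUnion (hrun ⟨le_rfl, hnp⟩).1 hx))
    (by have := h.a_add_lt_b n; omega) (fun z hz => hY'X' (hF hz)) hGF.1.injOn
  have hbM := h.add_one_le_of_coarse hpW (by omega) (fun z hz => hYX (hG hz)) hGF.2.injOn hV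
    (fun x hx => hY' x (mem_biUnion hMW' hx)) ⟨hF hyY, hyM⟩
    (by rw [hGF.1 hyY]; exact hyn.2.trans_lt (h.b_lt_a hnp))
  rcases lt_or_ge M n with hMn | hnM
  · have : b M + 1 ≤ a n := h.b_lt_a hMn
    have := h.le_four_mul_of_b_le le_rfl (hbn.trans (by gcongr))
    omega
  rcases lt_or_ge M p with hMp | hpM
  · exact (hrun ⟨hnM, hMp⟩).2 hMW'
  · have := h.le_four_mul_of_b_le hpM hbM
    omega

/-- For intervals `I_n = [a_n, b_n]` with `1 ≤ a_n ≤ b_n < a_{n+1}` and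
`b_n - a_n > n·a_n`, and almost disjoint distinct infinite `W, W' ⊆ ℕ`,
the sets `I_W = ⋃_{n ∈ W} [a_n, b_n]` and `I_{W'}` are not coarsely equivalent. -/
theorem interval_unions_not_coarsely_equiv
    (a b : ℕ → ℕ)
    (ha : ∀ n, 1 ≤ a n) (hab : ∀ n, a n ≤ b n) (hba : ∀ n, b n < a (n + 1))
    (hgrow : ∀ n, b n - a n > n * a n)
    (W W' : Set ℕ) (hW : W.Infinite) (hW' : W'.Infinite)
    (had : (W ∩ W').Finite) (hne : W ≠ W') :
    ¬ NatCoarselyEquiv (⋃ n ∈ W, Set.Icc (a n) (b n)) (⋃ n ∈ W', Set.Icc (a n) (b n)) :=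
  interval_unions_not_coarsely_equiv_general a b hab hba hgrow W W' hW hW' had
end

section
/- For every infinite finitely generated group G, there exists a family 𝔉 of subsets of G with |𝔉| = 2^ℵ₀ such that any two distinct members of 𝔉 are not coarsely equivalent as subsets of G. -/
open Pointwise

namespace CoarseAux

variable {G : Type*} [Group G] [DecidableEq G]

structure Pack (G : Type*) [Group G] [DecidableEq G] where
  S : Finset G
  one_mem : (1:G) ∈ S
  inv_mem : ∀ s ∈ S, s⁻¹ ∈ S
  gen : ∀ g : G, ∃ n : ℕ, g ∈ S ^ n

namespace Pack

variable (P : Pack G)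

lemma one_mem_pow (n : ℕ) : (1:G) ∈ P.S ^ n := by
  induction n with
  | zero => simp
  | succ n ih => rw [pow_succ]; simpa using Finset.mul_mem_mul ih P.one_mem

lemma pow_subset_pow {m n : ℕ} (h : m ≤ n) : P.S ^ m ⊆ P.S ^ n := by
  induction n with
  | zero => simpa [Nat.le_zero.mp h] using Finset.Subset.refl _
  | succ n ih =>
    rcases Nat.lt_succ_iff_lt_or_eq.mp (Nat.lt_succ_of_le h) with h' | rfl
    · intro g hg
      have : g ∈ P.S ^ n := ih (Nat.lt_succ_iff.mp h') hg
      rw [pow_succ]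
      simpa using Finset.mul_mem_mul this P.one_mem
    · exact Finset.Subset.refl _

lemma mul_mem_pow {g h : G} {m n : ℕ} (hg : g ∈ P.S ^ m) (hh : h ∈ P.S ^ n) :
    g * h ∈ P.S ^ (m + n) := by
  rw [pow_add]; exact Finset.mul_mem_mul hg hh

lemma inv_mem_pow {g : G} {n : ℕ} (hg : g ∈ P.S ^ n) : g⁻¹ ∈ P.S ^ n := by
  induction n generalizing g with
  | zero => simp_all
  | succ n ih =>
    rw [pow_succ] at hg
    rcases Finset.mem_mul.mp hg with ⟨h, hh, s, hs, rfl⟩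
    rw [mul_inv_rev, pow_succ']
    exact Finset.mul_mem_mul (P.inv_mem s hs) (ih hh)


variable [Infinite G]

lemma card_lt (n : ℕ) : (P.S ^ n).card < (P.S ^ (n+1)).card := by
  by_contra h
  have hsub := P.pow_subset_pow (Nat.le_succ n)
  have he : P.S ^ (n+1) = P.S ^ n :=
    (Finset.eq_of_subset_of_card_le hsub (le_of_not_gt h)).symm
  have hstab : ∀ m : ℕ, P.S ^ (n + m) = P.S ^ n := by
    intro m
    induction m with
    | zero => rfl
    | succ m ih => rw [← Nat.add_assoc, pow_succ, ih, ← pow_succ, he]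
  have hall : ∀ g : G, g ∈ P.S ^ n := by
    intro g
    obtain ⟨m, hm⟩ := P.gen g
    rcases le_or_gt m n with h' | h'
    · exact P.pow_subset_pow h' hm
    · have : P.S ^ m = P.S ^ n := by
        have : m = n + (m - n) := by omega
        rw [this, hstab]
      exact this ▸ hm
  have : (Set.univ : Set G).Finite :=
    Set.Finite.subset (P.S ^ n).finite_toSet (fun g _ => hall g)
  exact Set.infinite_univ this

lemma card_pow_ge (n : ℕ) : n + 1 ≤ (P.S ^ n).card := by
  induction n with
  | zero => rw [pow_zero]; simp
  | succ n ih => have := P.card_lt n; omega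

lemma exists_len_eq (n : ℕ) : ∃ g : G, g ∈ P.S ^ (n+1) ∧ g ∉ P.S ^ n := by
  have h := P.card_lt n
  have hsub := P.pow_subset_pow (Nat.le_succ n)
  have hss : P.S ^ n ⊂ P.S ^ (n+1) :=
    hsub.ssubset_of_ne (fun he => by rw [he] at h; exact lt_irrefl _ h)
  obtain ⟨g, hg1, hg2⟩ := Finset.exists_of_ssubset hss
  exact ⟨g, hg1, hg2⟩

lemma finset_sub_pow (F : Finset G) : ∃ n : ℕ, F ⊆ P.S ^ n := by
  classical
  induction F using Finset.induction_on with
  | empty => exact ⟨0, by simp⟩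
  | @insert a F ha ih =>
    obtain ⟨n, hn⟩ := ih
    obtain ⟨m, hm⟩ := P.gen a
    refine ⟨max m n, ?_⟩
    intro x hx
    rcases Finset.mem_insert.mp hx with rfl | hx
    · exact P.pow_subset_pow (le_max_left m n) hm
    · exact P.pow_subset_pow (le_max_right m n) (hn hx)

noncomputable def len (g : G) : ℕ := Nat.find (P.gen g)

lemma mem_pow_len (g : G) : g ∈ P.S ^ (P.len g) := Nat.find_spec (P.gen g)

lemma len_le_iff {g : G} {n : ℕ} : P.len g ≤ n ↔ g ∈ P.S ^ n := by
  constructor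
  · intro h; exact P.pow_subset_pow h (P.mem_pow_len g)
  · intro h; exact Nat.find_le h

lemma len_mul_le (g h : G) : P.len (g * h) ≤ P.len g + P.len h :=
  P.len_le_iff.mpr (P.mul_mem_pow (P.mem_pow_len g) (P.mem_pow_len h))

lemma len_inv (g : G) : P.len g⁻¹ = P.len g := by
  have h1 : ∀ x : G, P.len x⁻¹ ≤ P.len x := fun x =>
    P.len_le_iff.mpr (P.inv_mem_pow (P.mem_pow_len x))
  have := h1 g⁻¹
  rw [inv_inv] at this
  exact le_antisymm (h1 g) this

lemma trunc : ∀ (d : ℕ) (g : G) (i : ℕ), i ≤ P.len g → P.len g - i = d →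
    ∃ z u : G, P.len z = i ∧ u ∈ P.S ^ (P.len g - i) ∧ g = u * z := by
  intro d
  induction d with
  | zero =>
    intro g i hi hd
    refine ⟨g, 1, by omega, ?_, (one_mul g).symm⟩
    rw [hd, pow_zero]; simp
  | succ d ih =>
    intro g i hi hd
    obtain ⟨z', u', hz', hu', hg'⟩ := ih g (i+1) (by omega) (by omega)
    have hz'mem : z' ∈ P.S ^ (i + 1) := hz' ▸ P.mem_pow_len z'
    rw [pow_succ'] at hz'mem
    rcases Finset.mem_mul.mp hz'mem with ⟨s, hs, w, hw, hzw⟩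
    have hwlen : P.len w = i := by
      have h1 : P.len w ≤ i := P.len_le_iff.mpr hw
      by_contra hne
      have h2 : P.len w < i := by omega
      have hs1 : s ∈ P.S ^ 1 := by rwa [pow_one]
      have hz'i : z' ∈ P.S ^ i := by
        have hmem : s * w ∈ P.S ^ (1 + P.len w) := P.mul_mem_pow hs1 (P.mem_pow_len w)
        rw [hzw] at hmem
        exact P.pow_subset_pow (by omega) hmem
      have := P.len_le_iff.mpr hz'i
      omega
    refine ⟨w, u' * s, hwlen, ?_, by rw [hg', ← hzw, mul_assoc]⟩
    have : u' * s ∈ P.S ^ (P.len g - (i+1) + 1) := P.mul_mem_pow hu' (by simpa using hs)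
    have heq : P.len g - (i+1) + 1 = P.len g - i := by omega
    rwa [heq] at this


omit [Infinite G] in
lemma mem_ball_iff {F : Finset G} {x z : G} :
    z ∈ (↑F : Set G) * {x} ↔ z * x⁻¹ ∈ F := by
  rw [Set.mem_mul]
  constructor
  · rintro ⟨a, ha, b, hb, rfl⟩
    simp only [Set.mem_singleton_iff] at hb
    subst hb; simpa using ha
  · intro h
    exact ⟨z * x⁻¹, h, x, rfl, by group⟩

omit [Infinite G] in
lemma ball_finite (F : Finset G) (x : G) : ((↑F : Set G) * {x}).Finite :=
  F.finite_toSet.mul (Set.finite_singleton x)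

omit [Infinite G] in
lemma ncard_ball_eq (F : Finset G) (x : G) : ((↑F : Set G) * {x}).ncard = F.card := by
  rw [Set.mul_singleton, Set.ncard_image_of_injective _ (mul_left_injective x),
    Set.ncard_coe_finset]

lemma ball_in_ball (a ρ : ℕ) (c x : G) (hx : x * c⁻¹ ∈ P.S ^ a) :
    min (ρ / 2) a + 1 ≤ (((↑(P.S ^ ρ) : Set G) * {x}) ∩ ((↑(P.S ^ a) : Set G) * {c})).ncard := by
  classical
  set g : G := x * c⁻¹ with hg
  set j : ℕ := P.len g with hj
  have hja : j ≤ a := P.len_le_iff.mpr hx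
  set q : ℕ := min (ρ / 2) a with hq
  set T : Set G := ((↑(P.S ^ ρ) : Set G) * {x}) ∩ ((↑(P.S ^ a) : Set G) * {c}) with hT
  have hTfin : T.Finite := (ball_finite _ _).inter_of_left _
  rcases le_or_gt q j with hcase | hcase
  · -- many truncation points
    have H : ∀ i : Fin (q + 1), ∃ z u : G,
        P.len z = j - (i : ℕ) ∧ u ∈ P.S ^ (j - (j - (i : ℕ))) ∧ g = u * z := by
      intro i
      obtain ⟨z, u, h1, h2, h3⟩ := P.trunc (j - (j - (i:ℕ))) g (j - (i:ℕ)) (by omega) rfl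
      exact ⟨z, u, h1, h2, h3⟩
    choose z u hz hu hgz using H
    have hmem : ∀ i : Fin (q + 1), z i * c ∈ T := by
      intro i
      constructor
      · rw [mem_ball_iff]
        have h6 : x * c⁻¹ = u i * z i := by rw [← hg]; exact hgz i
        have h7 : x = u i * z i * c := by rw [← mul_inv_eq_iff_eq_mul]; exact h6
        have : (z i * c) * x⁻¹ = (u i)⁻¹ := by rw [h7]; group
        rw [this]
        refine P.pow_subset_pow (show j - (j - (i:ℕ)) ≤ ρ by
          have := i.2
          have h2 : (i:ℕ) ≤ q := by omega
          have h3 : q ≤ ρ / 2 := min_le_left _ _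
          omega) (P.inv_mem_pow (hu i))
      · rw [mem_ball_iff]
        have : (z i * c) * c⁻¹ = z i := by group
        rw [this]
        exact P.pow_subset_pow (by omega) (hz i ▸ P.mem_pow_len (z i))
    have hinj : Function.Injective (fun i : Fin (q+1) => z i * c) := by
      intro i i' he
      simp only [mul_left_cancel_iff, mul_right_cancel_iff] at he
      have : P.len (z i) = P.len (z i') := by rw [he]
      rw [hz i, hz i'] at this
      have hi := i.2; have hi' := i'.2
      exact Fin.ext (by omega)
    calc q + 1 = ((Finset.univ : Finset (Fin (q+1))).image (fun i => z i * c)).card := by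
          rw [Finset.card_image_of_injective _ hinj, Finset.card_univ, Fintype.card_fin]
      _ = ((↑((Finset.univ : Finset (Fin (q+1))).image (fun i => z i * c)) : Set G)).ncard := by
          rw [Set.ncard_coe_finset]
      _ ≤ T.ncard := by
          refine Set.ncard_le_ncard ?_ hTfin
          intro w hw
          simp only [Finset.coe_image, Set.mem_image] at hw
          obtain ⟨i, _, rfl⟩ := hw
          exact hmem i
  · -- ball around the center
    set m : ℕ := min (ρ - j) a with hm
    have hρj : j < ρ / 2 + 1 := by
      have : q ≤ ρ / 2 := min_le_left _ _
      omega
    have hqm : q ≤ m := by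
      refine le_min ?_ (min_le_right _ _)
      have h1 : q ≤ ρ / 2 := min_le_left _ _
      omega
    have hsub : ((↑(P.S ^ m) : Set G) * {c}) ⊆ T := by
      intro w hw
      rw [mem_ball_iff] at hw
      constructor
      · rw [mem_ball_iff]
        have hdec : w * x⁻¹ = (w * c⁻¹) * (c * x⁻¹) := by group
        have hcx : c * x⁻¹ ∈ P.S ^ j := by
          have : c * x⁻¹ = g⁻¹ := by rw [hg]; group
          rw [this]
          exact P.inv_mem_pow (P.mem_pow_len g)
        rw [hdec]
        have := P.mul_mem_pow hw hcx
        refine P.pow_subset_pow ?_ this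
        have : m ≤ ρ - j := min_le_left _ _
        omega
      · rw [mem_ball_iff]
        exact P.pow_subset_pow (min_le_right _ _) hw
    calc q + 1 ≤ m + 1 := by omega
      _ ≤ (P.S ^ m).card := P.card_pow_ge m
      _ = ((↑(P.S ^ m) : Set G) * {c}).ncard := (ncard_ball_eq _ _).symm
      _ ≤ T.ncard := Set.ncard_le_ncard hsub hTfin

end Pack

namespace Pack

noncomputable def rad (Pk : Pack G) : ℕ → ℕ
  | 0 => 1
  | (k+1) => k * (Pk.S ^ (Pk.rad k)).card + 1

def lev (n : ℕ) : ℕ := (Nat.unpair n).1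

variable (P : Pack G) [Infinite G]

noncomputable def tk (k : ℕ) : ℕ := (P.S ^ P.rad k).card

lemma tk_ge (k : ℕ) : P.rad k + 1 ≤ P.tk k := P.card_pow_ge _

lemma rad_mono_succ (k : ℕ) : P.rad k ≤ P.rad (k+1) := by
  rw [show P.rad (k+1) = k * (P.S ^ (P.rad k)).card + 1 from rfl]
  have := P.card_pow_ge (P.rad k)
  cases k with
  | zero => simp [rad]
  | succ k =>
    have : P.rad (k+1) + 1 ≤ (P.S ^ (P.rad (k+1))).card := P.card_pow_ge _
    nlinarith

lemma tk_mono : Monotone P.tk := by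
  apply monotone_nat_of_le_succ
  intro k
  exact Finset.card_le_card (P.pow_subset_pow (P.rad_mono_succ k))

lemma tk_succ_gt (k : ℕ) : k * P.tk k < P.tk (k+1) := by
  have h1 : P.rad (k+1) + 1 ≤ P.tk (k+1) := P.tk_ge (k+1)
  have h2 : P.rad (k+1) = k * P.tk k + 1 := rfl
  omega

lemma tk_pos (k : ℕ) : 1 ≤ P.tk k := by have := P.tk_ge k; omega

lemma tk_separated {C k ℓ : ℕ} (hk : C + 2 ≤ k)
    (h1 : P.tk k ≤ C * P.tk ℓ) (h2 : P.tk ℓ ≤ C * P.tk k) : ℓ = k := by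
  by_contra hne
  rcases lt_or_gt_of_ne hne with hlt | hgt
  · -- ℓ < k
    have e1 : (k-1) * P.tk (k-1) < P.tk k := by
      have := P.tk_succ_gt (k-1)
      have hk1 : k - 1 + 1 = k := by omega
      rwa [hk1] at this
    have e2 : P.tk ℓ ≤ P.tk (k-1) := P.tk_mono (by omega)
    have e3 : C * P.tk ℓ ≤ (k-1) * P.tk (k-1) :=
      Nat.mul_le_mul (by omega) e2
    omega
  · -- k < ℓ
    have e1 : k * P.tk k < P.tk (k+1) := P.tk_succ_gt k
    have e2 : P.tk (k+1) ≤ P.tk ℓ := P.tk_mono (by omega)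
    have e3 : C * P.tk k + 2 ≤ k * P.tk k := by
      have := P.tk_pos k
      nlinarith
    omega

noncomputable def Rn (Pk : Pack G) (n : ℕ) : ℕ := Pk.rad (lev n)

noncomputable def T (Pk : Pack G) : ℕ → ℕ
  | 0 => Pk.Rn 0 + 1
  | (n+1) => Pk.T n + Pk.Rn n + Pk.Rn (n+1) + n + 3

lemma T_pos (n : ℕ) : 1 ≤ P.T n := by
  cases n with
  | zero => rw [show P.T 0 = P.Rn 0 + 1 from rfl]; omega
  | succ n => rw [show P.T (n+1) = P.T n + P.Rn n + P.Rn (n+1) + n + 3 from rfl]; omega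

lemma T_spread : ∀ {m n : ℕ}, m < n → P.T m + P.Rn m + P.Rn n + n + 2 ≤ P.T n := by
  intro m n
  induction n with
  | zero => omega
  | succ n ih =>
    intro hmn
    have hTsucc : P.T (n+1) = P.T n + P.Rn n + P.Rn (n+1) + n + 3 := rfl
    rcases Nat.lt_succ_iff_lt_or_eq.mp hmn with h | rfl
    · have := ih h
      omega
    · omega

noncomputable def cen (n : ℕ) : G := (P.exists_len_eq (P.T n - 1)).choose

lemma len_cen (n : ℕ) : P.len (P.cen n) = P.T n := by
  obtain ⟨h1, h2⟩ := (P.exists_len_eq (P.T n - 1)).choose_spec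
  have hpos := P.T_pos n
  have e1 : P.len (P.cen n) ≤ P.T n - 1 + 1 := P.len_le_iff.mpr h1
  have e2 : ¬ (P.len (P.cen n) ≤ P.T n - 1) := fun h => h2 (P.len_le_iff.mp h)
  omega

noncomputable def Q (n : ℕ) : Set G := (↑(P.S ^ P.Rn n) : Set G) * {P.cen n}

noncomputable def Xset (A : Set ℕ) : Set G := {g | ∃ n, lev n ∈ A ∧ g ∈ P.Q n}

lemma mem_Xset {A : Set ℕ} {g : G} : g ∈ P.Xset A ↔ ∃ n, lev n ∈ A ∧ g ∈ P.Q n :=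
  Iff.rfl

lemma cen_mem_Q (n : ℕ) : P.cen n ∈ P.Q n := by
  rw [Q, mem_ball_iff, mul_inv_cancel]
  exact P.one_mem_pow _

lemma Q_finite (n : ℕ) : (P.Q n).Finite := ball_finite _ _

lemma ncard_Q (n : ℕ) : (P.Q n).ncard = P.tk (lev n) := ncard_ball_eq _ _

lemma mem_Q_iff {n : ℕ} {g : G} : g ∈ P.Q n ↔ g * (P.cen n)⁻¹ ∈ P.S ^ P.Rn n :=
  mem_ball_iff

lemma sep {m n ρ : ℕ} (hmn : m ≠ n) {x z : G} (hx : x ∈ P.Q m) (hz : z ∈ P.Q n)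
    (hnear : z * x⁻¹ ∈ P.S ^ ρ) : max m n + 2 ≤ ρ := by
  rw [mem_Q_iff] at hx hz
  have hcc : P.cen n * (P.cen m)⁻¹ ∈ P.S ^ (P.Rn n + (ρ + P.Rn m)) := by
    have hdec : P.cen n * (P.cen m)⁻¹ =
        (z * (P.cen n)⁻¹)⁻¹ * ((z * x⁻¹) * (x * (P.cen m)⁻¹)) := by group
    rw [hdec]
    exact P.mul_mem_pow (P.inv_mem_pow hz) (P.mul_mem_pow hnear hx)
  have hlenle : P.len (P.cen n * (P.cen m)⁻¹) ≤ P.Rn n + ρ + P.Rn m := by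
    have := P.len_le_iff.mpr hcc
    omega
  have htri1 : P.T n ≤ P.len (P.cen n * (P.cen m)⁻¹) + P.T m := by
    have h := P.len_mul_le (P.cen n * (P.cen m)⁻¹) (P.cen m)
    rw [inv_mul_cancel_right] at h
    rw [← P.len_cen n, ← P.len_cen m]
    exact h
  have htri2 : P.T m ≤ P.len (P.cen n * (P.cen m)⁻¹) + P.T n := by
    have h := P.len_mul_le (P.cen m * (P.cen n)⁻¹) (P.cen n)
    rw [inv_mul_cancel_right] at h
    have hsym : P.len (P.cen m * (P.cen n)⁻¹) = P.len (P.cen n * (P.cen m)⁻¹) := by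
      rw [← P.len_inv]; congr 1; group
    rw [← P.len_cen n, ← P.len_cen m, ← hsym]
    exact h
  rcases lt_or_gt_of_ne hmn with h | h
  · have := P.T_spread h
    omega
  · have := P.T_spread h
    omega

lemma Q_disjoint {m n : ℕ} (hmn : m ≠ n) : Disjoint (P.Q m) (P.Q n) := by
  rw [Set.disjoint_left]
  intro z hzm hzn
  have : z * z⁻¹ ∈ P.S ^ 0 := by rw [mul_inv_cancel, pow_zero]; simp
  have := P.sep hmn hzm hzn this
  omega

noncomputable def cnt (ρ : ℕ) (x : G) (Y : Set G) : ℕ :=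
  (Y ∩ ((↑(P.S ^ ρ) : Set G) * {x})).ncard

omit [Infinite G] in
lemma cnt_finite (ρ : ℕ) (x : G) (Y : Set G) :
    (Y ∩ ((↑(P.S ^ ρ) : Set G) * {x})).Finite :=
  Set.Finite.inter_of_right (ball_finite _ _) _

omit [Infinite G] in
lemma cnt_mono_rad {ρ ρ' : ℕ} (h : ρ ≤ ρ') (x : G) (Y : Set G) :
    P.cnt ρ x Y ≤ P.cnt ρ' x Y := by
  apply Set.ncard_le_ncard _ (P.cnt_finite ρ' x Y)
  rintro z ⟨hz1, hz2⟩
  rw [mem_ball_iff] at hz2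
  exact ⟨hz1, mem_ball_iff.mpr (P.pow_subset_pow h hz2)⟩

omit [Infinite G] in
lemma covering_count {Pset Qset : Set G} {d : ℕ} (hQfin : Qset.Finite)
    (h : ∀ x ∈ Pset, ∃ y ∈ Qset, x * y⁻¹ ∈ P.S ^ d) :
    Pset.ncard ≤ (P.S ^ d).card * Qset.ncard := by
  have hsub : Pset ⊆ (↑(P.S ^ d) : Set G) * Qset := by
    intro x hx
    obtain ⟨y, hy, hxy⟩ := h x hx
    exact ⟨x * y⁻¹, hxy, y, hy, by group⟩
  calc Pset.ncard ≤ ((↑(P.S ^ d) : Set G) * Qset).ncard :=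
        Set.ncard_le_ncard hsub ((P.S ^ d).finite_toSet.mul hQfin)
    _ ≤ (↑(P.S ^ d) : Set G).ncard * Qset.ncard := by
        rw [← Nat.card_coe_set_eq, ← Nat.card_coe_set_eq, ← Nat.card_coe_set_eq]
        exact Set.natCard_mul_le
    _ = (P.S ^ d).card * Qset.ncard := by rw [Set.ncard_coe_finset]

omit [Infinite G] in
lemma cnt_transfer {Y Y' : Set G} (f : ↥Y ≃ ↥Y') {ρ ρ' : ℕ}
    (h : ∀ x y : Y, (y : G) * (x : G)⁻¹ ∈ P.S ^ ρ →
      (f y : G) * (f x : G)⁻¹ ∈ P.S ^ ρ')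
    {y : G} (hy : y ∈ Y) : P.cnt ρ y Y ≤ P.cnt ρ' (f ⟨y, hy⟩ : G) Y' := by
  classical
  set φ : G → G := fun z => if hz : z ∈ Y then (f ⟨z, hz⟩ : G) else 1 with hφ
  refine Set.ncard_le_ncard_of_injOn φ ?_ ?_ (P.cnt_finite ρ' _ Y')
  · rintro z ⟨hzY, hzb⟩
    rw [mem_ball_iff] at hzb
    have := h ⟨y, hy⟩ ⟨z, hzY⟩ hzb
    refine ⟨?_, ?_⟩
    · simp only [hφ, dif_pos hzY]
      exact (f ⟨z, hzY⟩).2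
    · rw [mem_ball_iff]
      simpa [hφ, dif_pos hzY] using this
  · rintro z ⟨hzY, _⟩ w ⟨hwY, _⟩ he
    simp only [hφ, dif_pos hzY, dif_pos hwY] at he
    have : f ⟨z, hzY⟩ = f ⟨w, hwY⟩ := Subtype.ext he
    have := f.injective this
    exact congrArg Subtype.val this

lemma asym_radius {Y Y' : Set G} {f : ↥Y → ↥Y'}
    (hf : ∀ F : Finset G, ∃ F' : Finset G, ∀ x y : Y,
      (y : G) ∈ (↑F : Set G) * {(x : G)} ∪ {(x : G)} →
      (f y : G) ∈ (↑F' : Set G) * {(f x : G)} ∪ {(f x : G)}) (ρ : ℕ) :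
    ∃ ρ' : ℕ, ∀ x y : Y, (y : G) * (x : G)⁻¹ ∈ P.S ^ ρ →
      (f y : G) * (f x : G)⁻¹ ∈ P.S ^ ρ' := by
  obtain ⟨F', hF'⟩ := hf (P.S ^ ρ)
  obtain ⟨ρ', hρ'⟩ := P.finset_sub_pow F'
  refine ⟨ρ', ?_⟩
  intro x y hxy
  have := hF' x y (Or.inl (mem_ball_iff.mpr hxy))
  rcases this with h | h
  · rw [mem_ball_iff] at h
    exact hρ' h
  · simp only [Set.mem_singleton_iff] at h
    rw [h, mul_inv_cancel]
    exact P.one_mem_pow _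

lemma cnt_le_clump {A : Set ℕ} {Y : Set G} (hY : Y ⊆ P.Xset A) {n ρ : ℕ}
    (hn : ρ < n + 2) {y : G} (hy : y ∈ P.Q n) : P.cnt ρ y Y ≤ P.tk (lev n) := by
  have hsub : Y ∩ ((↑(P.S ^ ρ) : Set G) * {y}) ⊆ P.Q n := by
    rintro z ⟨hzY, hzb⟩
    rw [mem_ball_iff] at hzb
    obtain ⟨m, _, hzQ⟩ := hY hzY
    by_cases hmn : m = n
    · exact hmn ▸ hzQ
    · exact absurd (P.sep (Ne.symm hmn) hy hzQ hzb) (by omega)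
  calc P.cnt ρ y Y ≤ (P.Q n).ncard := Set.ncard_le_ncard hsub (P.Q_finite n)
    _ = P.tk (lev n) := P.ncard_Q n

omit [Infinite G] in
lemma large_net {Y Xs : Set G} {F₀ : Finset G} {c₀ : ℕ}
    (h : Xs ⊆ (↑F₀ : Set G) * Y ∪ Y) (hF₀ : F₀ ⊆ P.S ^ c₀) :
    ∀ q ∈ Xs, ∃ y ∈ Y, q * y⁻¹ ∈ P.S ^ c₀ := by
  intro q hq
  rcases h hq with hq' | hq'
  · obtain ⟨g, hg, y, hy, rfl⟩ := hq'
    exact ⟨y, hy, by simpa using hF₀ hg⟩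
  · exact ⟨q, hq', by rw [mul_inv_cancel]; exact P.one_mem_pow _⟩

lemma not_coarselyEquiv {A B : Set ℕ} (hAB : {k | k ∈ A ∧ k ∉ B}.Infinite) :
    ¬ CoarselyEquiv (P.Xset A) (P.Xset B) := by
  rintro ⟨Y, Y', ⟨hYsub, F₀, hYlarge⟩, ⟨hY'sub, F₀', hY'large⟩, f, hfwd, hbwd⟩
  obtain ⟨c₀, hc₀⟩ := P.finset_sub_pow F₀
  obtain ⟨c₁, hc₁⟩ := P.finset_sub_pow F₀'
  set D : ℕ := (P.S ^ c₀).card with hD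
  set D' : ℕ := (P.S ^ c₁).card with hD'
  set C : ℕ := max D D' with hC
  obtain ⟨k, hkmem, hkgt⟩ := hAB.exists_gt (C + 2)
  obtain ⟨hkA, hkB⟩ := hkmem
  set t : ℕ := P.tk k with ht
  set α : ℕ := P.rad k with hα
  set r₁ : ℕ := 2 * α + 2 * c₀ with hr₁
  obtain ⟨r₂, hr₂⟩ := P.asym_radius hfwd r₁
  set σ : ℕ := c₁ + 2 * (D' * t + 1) with hσ
  obtain ⟨ρσ, hρσ⟩ := P.asym_radius hbwd σ
  set Pbig : ℕ := c₁ + 2 * (D' * t) with hPbig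
  obtain ⟨ρP, hρP⟩ := P.asym_radius hbwd Pbig
  set Nb : ℕ := c₀ + ρσ + ρP + 1 with hNb
  -- the net points near the centers of the level-`k` clumps
  have hydef : ∀ j : ℕ, ∃ y, y ∈ Y ∧ P.cen (Nat.pair k j) * y⁻¹ ∈ P.S ^ c₀ := by
    intro j
    have hcenX : P.cen (Nat.pair k j) ∈ P.Xset A := by
      refine ⟨Nat.pair k j, ?_, P.cen_mem_Q _⟩
      simp [Pack.lev, Nat.unpair_pair, hkA]
    obtain ⟨y, hy1, hy2⟩ := P.large_net hYlarge hc₀ _ hcenX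
    exact ⟨y, hy1, hy2⟩
  choose yy hyY hynear using hydef
  have hlev : ∀ j : ℕ, Pack.lev (Nat.pair k j) = k := by
    intro j; simp [Pack.lev, Nat.unpair_pair]
  -- each net point lies in its own clump
  have hyQ : ∀ j : ℕ, c₀ ≤ Nat.pair k j → yy j ∈ P.Q (Nat.pair k j) := by
    intro j hj
    obtain ⟨m, _, hmQ⟩ := hYsub (hyY j)
    by_cases hmn : m = Nat.pair k j
    · exact hmn ▸ hmQ
    · have := P.sep hmn hmQ (P.cen_mem_Q (Nat.pair k j)) (hynear j)
      omega
  -- injectivity of the net points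
  have hyinj : ∀ j j' : ℕ, c₀ ≤ j → c₀ ≤ j' → yy j = yy j' → j = j' := by
    intro j j' hj hj' he
    by_contra hne
    have h1 : yy j ∈ P.Q (Nat.pair k j) :=
      hyQ j (le_trans hj (Nat.right_le_pair k j))
    have h2 : yy j' ∈ P.Q (Nat.pair k j') :=
      hyQ j' (le_trans hj' (Nat.right_le_pair k j'))
    rw [he] at h1
    have hpair : Nat.pair k j ≠ Nat.pair k j' := by
      intro hcontra
      exact hne (Nat.pair_eq_pair.mp hcontra).2
    exact (P.Q_disjoint hpair).ne_of_mem h1 h2 rfl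
  -- the clump of the image point
  have hn'def : ∀ j : ℕ, ∃ n', Pack.lev n' ∈ B ∧ (f ⟨yy j, hyY j⟩ : G) ∈ P.Q n' := by
    intro j
    exact hY'sub (f ⟨yy j, hyY j⟩).2
  choose nfun hnB hnQ using hn'def
  -- pigeonhole: find a far clump whose image clump is also far
  have hjex : ∃ j : ℕ, Nb ≤ j ∧ r₂ ≤ nfun j := by
    by_contra hcon
    push_neg at hcon
    have hW : (⋃ i ∈ Finset.range r₂, P.Q i).Finite :=
      Set.Finite.biUnion (Finset.range r₂).finite_toSet (fun i _ => P.Q_finite i)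
    have himg : (fun j => (f ⟨yy j, hyY j⟩ : G)) '' (Set.Ici Nb) ⊆
        ⋃ i ∈ Finset.range r₂, P.Q i := by
      rintro z ⟨j, hj, rfl⟩
      have := hcon j hj
      exact Set.mem_biUnion (Finset.mem_range.mpr this) (hnQ j)
    have hinj : Set.InjOn (fun j => (f ⟨yy j, hyY j⟩ : G)) (Set.Ici Nb) := by
      intro j hj j' hj' he
      have : f ⟨yy j, hyY j⟩ = f ⟨yy j', hyY j'⟩ := Subtype.ext he
      have := f.injective this
      have hyy : yy j = yy j' := congrArg Subtype.val this
      exact hyinj j j' (le_trans (by omega) hj) (le_trans (by omega) hj') hyy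
    exact (((Set.Ici_infinite Nb).image hinj).mono himg) hW
  obtain ⟨j, hjNb, hjr₂⟩ := hjex
  -- notation
  set n : ℕ := Nat.pair k j with hn
  have hnNb : Nb ≤ n := le_trans hjNb (Nat.right_le_pair k j)
  set y : G := yy j with hy
  have hyYm : y ∈ Y := hyY j
  set ys : ↥Y := ⟨y, hyYm⟩ with hys
  set y' : G := (f ys : G) with hy'
  have hy'Ym : y' ∈ Y' := (f ys).2
  set n' : ℕ := nfun j with hn'
  set ℓ : ℕ := Pack.lev n' with hℓ
  have hℓB : ℓ ∈ B := hnB j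
  have hy'Q : y' ∈ P.Q n' := hnQ j
  have hyQn : y ∈ P.Q n := hyQ j (le_trans (le_trans (by omega) hjNb) (Nat.right_le_pair k j))
  have hcny : P.cen n * y⁻¹ ∈ P.S ^ c₀ := hynear j
  have hlevn : Pack.lev n = k := hlev j
  set β : ℕ := P.rad ℓ with hβ
  have hy'cen : y' * (P.cen n')⁻¹ ∈ P.S ^ (P.Rn n') := P.mem_Q_iff.mp hy'Q
  have hRn' : P.Rn n' = β := rfl
  have hceny' : P.cen n' * y'⁻¹ ∈ P.S ^ (P.Rn n') := by
    have := P.inv_mem_pow hy'cen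
    rwa [mul_inv_rev, inv_inv] at this
  have hsymmy : (f.symm ⟨y', hy'Ym⟩ : G) = y := by
    have h1 : (⟨y', hy'Ym⟩ : ↥Y') = f ys := rfl
    rw [h1, Equiv.symm_apply_apply]
  -- upper bounds at y
  have hUp : ∀ ρ : ℕ, ρ < n + 2 → P.cnt ρ y Y ≤ t := by
    intro ρ hρ
    have := P.cnt_le_clump hYsub hρ hyQn
    rwa [hlevn] at this
  -- transfers through f.symm
  have htransσ : P.cnt σ y' Y' ≤ P.cnt ρσ y Y := by
    have := P.cnt_transfer f.symm hρσ hy'Ym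
    rwa [hsymmy] at this
  have htransP : P.cnt Pbig y' Y' ≤ P.cnt ρP y Y := by
    have := P.cnt_transfer f.symm hρP hy'Ym
    rwa [hsymmy] at this
  -- (1) lower bound: the clump at y is dense in Y
  have hlow1 : t ≤ D * P.cnt r₁ y Y := by
    have hcover : ∀ q ∈ P.Q n, ∃ z ∈ Y ∩ ((↑(P.S ^ r₁) : Set G) * {y}),
        q * z⁻¹ ∈ P.S ^ c₀ := by
      intro q hq
      have hqX : q ∈ P.Xset A := ⟨n, hlevn ▸ hkA, hq⟩
      obtain ⟨z, hzY, hzq⟩ := P.large_net hYlarge hc₀ q hqX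
      refine ⟨z, ⟨hzY, mem_ball_iff.mpr ?_⟩, hzq⟩
      have hdec : z * y⁻¹ = (q * z⁻¹)⁻¹ * ((q * (P.cen n)⁻¹) * (P.cen n * y⁻¹)) := by
        group
      rw [hdec]
      refine P.pow_subset_pow (show c₀ + (P.Rn n + c₀) ≤ r₁ by
        have : P.Rn n = α := by rw [Pack.Rn, hlevn]
        omega) ?_
      exact P.mul_mem_pow (P.inv_mem_pow hzq) (P.mul_mem_pow (P.mem_Q_iff.mp hq) hcny)
    have := P.covering_count (P.cnt_finite r₁ y Y) hcover
    calc t = (P.Q n).ncard := by rw [P.ncard_Q n, hlevn]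
      _ ≤ D * P.cnt r₁ y Y := this
  -- (2) transfer forward
  have htrans1 : P.cnt r₁ y Y ≤ P.cnt r₂ y' Y' := P.cnt_transfer f hr₂ hyYm
  -- (3) upper bound at y' by the clump of y'
  have hup3 : P.cnt r₂ y' Y' ≤ P.tk ℓ := P.cnt_le_clump hY'sub (by omega) hy'Q
  have hineq1 : t ≤ C * P.tk ℓ := by
    calc t ≤ D * P.cnt r₁ y Y := hlow1
      _ ≤ D * P.tk ℓ := Nat.mul_le_mul_left D (le_trans htrans1 hup3)
      _ ≤ C * P.tk ℓ := Nat.mul_le_mul_right _ (le_max_left _ _)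
  -- (4) Stage I : the radius of the image clump is at most D' * t
  have hstage1 : β ≤ D' * t := by
    by_contra hcon
    push_neg at hcon
    set ρB : ℕ := 2 * (D' * t + 1) with hρB
    have hBB := P.ball_in_ball (P.Rn n') ρB (P.cen n') y' hy'cen
    have hmin : min (ρB / 2) (P.Rn n') = D' * t + 1 := by
      rw [hRn']
      have : ρB / 2 = D' * t + 1 := by omega
      rw [this]
      exact min_eq_left (by omega)
    rw [hmin] at hBB
    have hcover : ∀ q ∈ ((↑(P.S ^ ρB) : Set G) * {y'}) ∩
        ((↑(P.S ^ (P.Rn n')) : Set G) * {P.cen n'}),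
        ∃ z ∈ Y' ∩ ((↑(P.S ^ σ) : Set G) * {y'}), q * z⁻¹ ∈ P.S ^ c₁ := by
      rintro q ⟨hqb, hqQ⟩
      have hqX : q ∈ P.Xset B := ⟨n', hℓB, hqQ⟩
      obtain ⟨z, hzY, hzq⟩ := P.large_net hY'large hc₁ q hqX
      refine ⟨z, ⟨hzY, mem_ball_iff.mpr ?_⟩, hzq⟩
      have hdec : z * y'⁻¹ = (q * z⁻¹)⁻¹ * (q * y'⁻¹) := by group
      rw [hdec]
      rw [mem_ball_iff] at hqb
      exact P.pow_subset_pow (by omega)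
        (P.mul_mem_pow (P.inv_mem_pow hzq) hqb)
    have hcc := P.covering_count (P.cnt_finite σ y' Y') hcover
    have hfinal : D' * t + 1 + 1 ≤ D' * t := by
      calc D' * t + 1 + 1 ≤ (((↑(P.S ^ ρB) : Set G) * {y'}) ∩
            ((↑(P.S ^ (P.Rn n')) : Set G) * {P.cen n'})).ncard := hBB
        _ ≤ D' * P.cnt σ y' Y' := hcc
        _ ≤ D' * t := Nat.mul_le_mul_left D'
            (le_trans htransσ (hUp ρσ (by omega)))
    omega
  -- (5) Stage II : the image clump is covered near y'
  have hstage2 : P.tk ℓ ≤ C * t := by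
    have hcover : ∀ q ∈ P.Q n', ∃ z ∈ Y' ∩ ((↑(P.S ^ Pbig) : Set G) * {y'}),
        q * z⁻¹ ∈ P.S ^ c₁ := by
      intro q hq
      have hqX : q ∈ P.Xset B := ⟨n', hℓB, hq⟩
      obtain ⟨z, hzY, hzq⟩ := P.large_net hY'large hc₁ q hqX
      refine ⟨z, ⟨hzY, mem_ball_iff.mpr ?_⟩, hzq⟩
      have hdec : z * y'⁻¹ = (q * z⁻¹)⁻¹ * ((q * (P.cen n')⁻¹) * (P.cen n' * y'⁻¹)) := by
        group
      rw [hdec]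
      refine P.pow_subset_pow (show c₁ + (P.Rn n' + P.Rn n') ≤ Pbig by
        rw [hRn']; omega) ?_
      exact P.mul_mem_pow (P.inv_mem_pow hzq)
        (P.mul_mem_pow (P.mem_Q_iff.mp hq) hceny')
    have hcc := P.covering_count (P.cnt_finite Pbig y' Y') hcover
    calc P.tk ℓ = (P.Q n').ncard := (P.ncard_Q n').symm
      _ ≤ D' * P.cnt Pbig y' Y' := hcc
      _ ≤ D' * t := Nat.mul_le_mul_left D' (le_trans htransP (hUp ρP (by omega)))
      _ ≤ C * t := Nat.mul_le_mul_right _ (le_max_right _ _)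
  have := P.tk_separated (C := C) (k := k) (ℓ := ℓ) (by omega) hineq1 hstage2
  rw [this] at hℓB
  exact hkB hℓB

end Pack

lemma exists_pack [Group.FG G] : Nonempty (Pack G) := by
  obtain ⟨S₀, hS₀⟩ := Group.FG.out (G := G)
  classical
  refine ⟨⟨(S₀ ∪ S₀.image (·⁻¹)) ∪ {1}, by simp, ?_, ?_⟩⟩
  · intro s hs
    simp only [Finset.mem_union, Finset.mem_image, Finset.mem_singleton] at hs ⊢
    rcases hs with (h | ⟨a, ha, rfl⟩) | rfl
    · exact Or.inl (Or.inr ⟨s, h, rfl⟩)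
    · simp [ha]
    · simp
  · intro g
    have hg : g ∈ Subgroup.closure (S₀ : Set G) := hS₀ ▸ Subgroup.mem_top g
    set S : Finset G := (S₀ ∪ S₀.image (·⁻¹)) ∪ {1} with hS
    have hSinv : ∀ s ∈ S, s⁻¹ ∈ S := by
      intro s hs
      simp only [hS, Finset.mem_union, Finset.mem_image, Finset.mem_singleton] at hs ⊢
      rcases hs with (h | ⟨a, ha, rfl⟩) | rfl
      · exact Or.inl (Or.inr ⟨s, h, rfl⟩)
      · simp [ha]
      · simp
    induction hg using Subgroup.closure_induction with
    | mem s hs =>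
      refine ⟨1, ?_⟩
      rw [pow_one, hS]
      exact Finset.mem_union_left _ (Finset.mem_union_left _ (by simpa using hs))
    | one => exact ⟨0, by simp⟩
    | mul a b _ _ ha hb =>
      obtain ⟨m, hm⟩ := ha; obtain ⟨n, hn⟩ := hb
      exact ⟨m + n, by rw [pow_add]; exact Finset.mul_mem_mul hm hn⟩
    | inv a _ ha =>
      obtain ⟨n, hn⟩ := ha
      refine ⟨n, ?_⟩
      clear * - hn hSinv
      induction n generalizing a with
      | zero => simp_all
      | succ n ih =>
        rw [pow_succ] at hn
        rcases Finset.mem_mul.mp hn with ⟨h, hh, s, hs, rfl⟩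
        rw [mul_inv_rev, pow_succ']
        exact Finset.mul_mem_mul (hSinv s hs) (ih _ hh)

end CoarseAux


/-- For every infinite finitely generated group `G`, there are `2^ℵ₀` subsets of `G`
that are pairwise non-coarsely-equivalent. -/
theorem fg_group_continuum_coarse_subsets
    (G : Type*) [Group G] [Infinite G] [Group.FG G] :
    ∃ 𝔉 : Set (Set G),
      Cardinal.mk 𝔉 = 2 ^ Cardinal.aleph0 ∧
      ∀ A ∈ 𝔉, ∀ B ∈ 𝔉, A ≠ B → ¬ CoarselyEquiv A B := by
  classical
  letI : DecidableEq G := Classical.decEq G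
  obtain ⟨P⟩ := CoarseAux.exists_pack (G := G)
  set code : (ℕ → Bool) → ℕ → ℕ :=
    fun σ n => Encodable.encode (List.ofFn (fun i : Fin n => σ i)) with hcode
  have hcode_inj : ∀ σ, Function.Injective (code σ) := by
    intro σ n m h
    have h2 := Encodable.encode_injective h
    simpa using congrArg List.length h2
  set Aset : (ℕ → Bool) → Set ℕ := fun σ => Set.range (code σ) with hAset
  have hdiff : ∀ σ τ, σ ≠ τ → {k | k ∈ Aset σ ∧ k ∉ Aset τ}.Infinite := by
    intro σ τ hne
    have hex : ∃ n, σ n ≠ τ n := by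
      by_contra hc; push_neg at hc; exact hne (funext hc)
    set N := Nat.find hex with hN
    have hsub : (code σ) '' {n | N < n} ⊆ {k | k ∈ Aset σ ∧ k ∉ Aset τ} := by
      rintro x ⟨n, hn, rfl⟩
      refine ⟨⟨n, rfl⟩, ?_⟩
      rintro ⟨m, hm⟩
      have hl := Encodable.encode_injective hm
      have hlen : m = n := by simpa using congrArg List.length hl
      subst hlen
      have hfun := List.ofFn_injective hl
      have hNm : σ N = τ N := by
        have := congrFun hfun ⟨N, hn⟩
        simpa using this.symm
      exact Nat.find_spec hex hNm
    exact ((Set.Ioi_infinite N).image ((hcode_inj σ).injOn)).mono hsub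
  set Fm : (ℕ → Bool) → Set G := fun σ => P.Xset (Aset σ) with hFm
  have hrefl : ∀ Z : Set G, CoarselyEquiv Z Z := by
    intro Z
    refine ⟨Z, Z, ⟨subset_rfl, ∅, by simp⟩, ⟨subset_rfl, ∅, by simp⟩, Equiv.refl _, ?_, ?_⟩
    · intro F; exact ⟨F, fun x y h => h⟩
    · intro F; exact ⟨F, fun x y h => h⟩
  have hFinj : Function.Injective Fm := by
    intro σ τ h
    by_contra hne
    have hce : CoarselyEquiv (Fm σ) (Fm τ) := h ▸ hrefl (Fm σ)
    exact P.not_coarselyEquiv (hdiff σ τ hne) hce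
  refine ⟨Set.range Fm, ?_, ?_⟩
  · have h1 := Cardinal.mk_range_eq_of_injective hFinj
    rw [Cardinal.lift_uzero] at h1
    rw [h1, Cardinal.mk_arrow]
    simp [Cardinal.mk_bool, Cardinal.mk_nat, Cardinal.lift_aleph0, Cardinal.lift_two]
  · rintro A ⟨σ, rfl⟩ B ⟨τ, rfl⟩ hne
    have hστ : σ ≠ τ := fun h => hne (congrArg Fm h)
    exact P.not_coarselyEquiv (hdiff σ τ hστ)
end

section
/- Let G be a group, let X, A be subsets of G, let Y ⊆ X be infinite, let A = B ∪ C with B ∩ C = ∅, and let k, l ∈ ℕ with k < l. Assume: (6) there is a finite H ⊆ G such that |B_X(y,H)| ≥ k for every y ∈ Y; (7) for every finite F ⊆ G there is a finite set Y₀ such that |B_X(y,F)| ≤ l for every y ∈ Y ∖ Y₀; (8) there is a finite K ⊆ G such that |B_A(b,K)| > l for every b ∈ B; (9) for every finite F ⊆ G there is a finite set C₀ such that |B_A(c,F)| < k for every c ∈ C ∖ C₀. Then there is no asymorphism from X onto A. -/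
open Pointwise

lemma ballIn_finite {G : Type*} [Group G] (X : Set G) (F : Finset G) (x : G) :
    (ballIn X F x).Finite := by
  apply Set.Finite.inter_of_left
  exact ((F.finite_toSet.mul (Set.finite_singleton x)).union (Set.finite_singleton x))

/-- Criterion for non-asymorphy: if `Y ⊆ X` is infinite, `A = B ∪ C` is a partition, and
`k < l` are such that balls around `Y` in `X` have size at least `k` but eventually at most
`l`, balls around `B` in `A` have size more than `l`, and balls around `C` in `A` eventually
have size less than `k`, then `X` and `A` are not asymorphic. -/
theorem not_asymorphic_of_ball_sizes
    (G : Type*) [Group G] (X A Y B C : Set G)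
    (hYX : Y ⊆ X) (hYinf : Y.Infinite)
    (hA : A = B ∪ C) (hBC : Disjoint B C)
    (k l : ℕ) (hkl : k < l)
    (h6 : ∃ H : Finset G, ∀ y ∈ Y, k ≤ (ballIn X H y).ncard)
    (h7 : ∀ F : Finset G, ∃ Y₀ : Finset G, ∀ y ∈ Y, y ∉ Y₀ → (ballIn X F y).ncard ≤ l)
    (h8 : ∃ K : Finset G, ∀ b ∈ B, l < (ballIn A K b).ncard)
    (h9 : ∀ F : Finset G, ∃ C₀ : Finset G, ∀ c ∈ C, c ∉ C₀ → (ballIn A F c).ncard < k) :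
    ¬ ∃ f : X ≃ A, IsAsymorphism X A f := by
  rintro ⟨f, hfwd, hbwd⟩
  obtain ⟨H, hH⟩ := h6
  obtain ⟨K, hK⟩ := h8
  obtain ⟨F₁, hF₁⟩ := hbwd K
  obtain ⟨F₂, hF₂⟩ := hfwd H
  obtain ⟨Y₀, hY₀⟩ := h7 F₁
  obtain ⟨C₀, hC₀⟩ := h9 F₂
  -- the set of points of Y mapping into C₀ is finite
  have hinjf : Function.Injective (fun y : X => (f y : G)) := by
    intro a b h
    exact f.injective (Subtype.ext h)
  have hpre : (Subtype.val '' ((fun y : X => (f y : G)) ⁻¹' (C₀ : Set G))).Finite := by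
    exact ((C₀.finite_toSet.preimage hinjf.injOn).image _)
  have hbig : (Y \ ((Y₀ : Set G) ∪ Subtype.val '' ((fun y : X => (f y : G)) ⁻¹' (C₀ : Set G)))).Infinite :=
    hYinf.diff (Y₀.finite_toSet.union hpre)
  obtain ⟨y₀, hy₀⟩ := hbig.nonempty
  have hy₀Y : y₀ ∈ Y := hy₀.1
  have hy₀X : y₀ ∈ X := hYX hy₀Y
  have hy₀Y₀ : y₀ ∉ Y₀ := fun h => hy₀.2 (Or.inl h)
  set b : A := f ⟨y₀, hy₀X⟩ with hb_def
  have hbA : (b : G) ∈ B ∪ C := by rw [← hA]; exact b.2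
  rcases hbA with hbB | hbC
  · -- b ∈ B : pull back the big ball
    have h1 : l < (ballIn A K (b : G)).ncard := hK _ hbB
    have h2 : (ballIn A K (b : G)).ncard ≤ (ballIn X F₁ y₀).ncard := by
      classical
      refine Set.ncard_le_ncard_of_injOn
        (fun a => if h : a ∈ A then (f.symm ⟨a, h⟩ : G) else a) ?_ ?_
        (ballIn_finite X F₁ y₀)
      · rintro a ⟨hball, haA⟩
        simp only [dif_pos haA]
        have := hF₁ b ⟨a, haA⟩ hball
        have heq : ((f.symm b : X) : G) = y₀ := by
          rw [hb_def, f.symm_apply_apply]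
        rw [heq] at this
        exact ⟨this, (f.symm ⟨a, haA⟩).2⟩
      · rintro a₁ ⟨_, h₁⟩ a₂ ⟨_, h₂⟩ h
        simp only [dif_pos h₁, dif_pos h₂] at h
        have := f.symm.injective (Subtype.ext h)
        exact congrArg Subtype.val this
    have h3 : (ballIn X F₁ y₀).ncard ≤ l := hY₀ y₀ hy₀Y hy₀Y₀
    omega
  · -- b ∈ C : push forward the big ball
    have hbC₀ : (b : G) ∉ C₀ := by
      intro h
      exact hy₀.2 (Or.inr ⟨⟨y₀, hy₀X⟩, h, rfl⟩)
    have h1 : (ballIn A F₂ (b : G)).ncard < k := hC₀ _ hbC hbC₀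
    have h2 : k ≤ (ballIn X H y₀).ncard := hH y₀ hy₀Y
    have h3 : (ballIn X H y₀).ncard ≤ (ballIn A F₂ (b : G)).ncard := by
      classical
      refine Set.ncard_le_ncard_of_injOn
        (fun x => if h : x ∈ X then (f ⟨x, h⟩ : G) else x) ?_ ?_
        (ballIn_finite A F₂ (b : G))
      · rintro x ⟨hball, hxX⟩
        simp only [dif_pos hxX]
        exact ⟨hF₂ ⟨y₀, hy₀X⟩ ⟨x, hxX⟩ hball, (f ⟨x, hxX⟩).2⟩
      · rintro a₁ ⟨_, h₁⟩ a₂ ⟨_, h₂⟩ h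
        simp only [dif_pos h₁, dif_pos h₂] at h
        exact congrArg Subtype.val (f.injective (Subtype.ext h))
    omega
end

section
/- Let G be a group, let F_t ⊆ F_n be finite subgroups of G, let g ∈ G, and let Z ⊆ G. If F_n·g ⊆ F_t·Z, then |F_n·g ∩ Z| ≥ |F_n| / |F_t|. -/
open Pointwise

/-- If `F_t ⊆ F_n` are finite subgroups of `G` and `F_n·g ⊆ F_t·Z`, then
`|F_n·g ∩ Z| ≥ |F_n| / |F_t|`. -/
theorem coset_inter_card_ge
    (G : Type*) [Group G] (Ft Fn : Subgroup G)
    (hFt : ((Ft : Subgroup G) : Set G).Finite) (hFn : ((Fn : Subgroup G) : Set G).Finite)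
    (hle : Ft ≤ Fn) (g : G) (Z : Set G)
    (h : (Fn : Set G) * {g} ⊆ (Ft : Set G) * Z) :
    Nat.card Fn / Nat.card Ft ≤ (((Fn : Set G) * {g}) ∩ Z).ncard := by
  set S : Set G := ((Fn : Set G) * {g}) ∩ Z with hS
  -- key covering claim
  have hcov : (Fn : Set G) * {g} ⊆ (Ft : Set G) * S := by
    rintro x hx
    obtain ⟨t, ht, z, hz, hxz⟩ := h hx
    obtain ⟨f, hf, g', hg', hxf⟩ := hx
    simp only [Set.mem_singleton_iff] at hg'
    have hx1 : f * g = x := by rw [← hg']; exact hxf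
    have hx2 : t * z = x := hxz
    have hzeq : (t⁻¹ * f) * g = z := by
      rw [mul_assoc, hx1, ← hx2, ← mul_assoc, inv_mul_cancel, one_mul]
    have hzS : z ∈ S := ⟨⟨t⁻¹ * f, mul_mem (inv_mem (hle ht)) hf, g, rfl, hzeq⟩, hz⟩
    exact ⟨t, ht, z, hzS, hx2⟩
  have hcard1 : Nat.card Fn = Nat.card (((Fn : Set G) * {g} : Set G)) := by
    have he : (Fn : Set G) * ({g} : Set G) = (· * g) '' (Fn : Set G) := Set.mul_singleton
    rw [he, Nat.card_image_of_injective (mul_left_injective g)]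
    rfl
  have hSfin : S.Finite := (hFn.mul (Set.finite_singleton g)).inter_of_left Z
  have : Finite ↑((Ft : Set G) * S) := (hFt.mul hSfin).to_subtype
  have hle2 : Nat.card (((Fn : Set G) * {g} : Set G)) ≤ Nat.card Ft * Nat.card S := by
    calc Nat.card (((Fn : Set G) * {g} : Set G)) ≤ Nat.card ((Ft : Set G) * S) :=
          Nat.card_le_card_of_injective _ (Set.inclusion_injective hcov)
      _ ≤ Nat.card (Ft : Set G) * Nat.card S := Set.natCard_mul_le
      _ = Nat.card Ft * Nat.card S := by rfl
  have hpos : 0 < Nat.card Ft := by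
    have : Finite Ft := hFt.to_subtype
    exact Nat.card_pos
  have : Nat.card Fn ≤ Nat.card Ft * S.ncard := by
    rw [hcard1, ← Nat.card_coe_set_eq]
    exact hle2
  calc Nat.card Fn / Nat.card Ft ≤ (Nat.card Ft * S.ncard) / Nat.card Ft :=
        Nat.div_le_div_right this
    _ = S.ncard := Nat.mul_div_cancel_left _ hpos
end

section
/- Let G be a group and let S, T be thin subsets of G. Then every bijection f : S → T is an asymorphism between S and T (as subsets of G); in particular, any two thin subsets of G of the same cardinality are asymorphic. -/
open Pointwise

/-- `S ⊆ G` is thin: for every finite `F ⊆ G` there is a finite `H ⊆ G` such that for all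
`g ∈ S ∖ H`, the ball `((F·g) ∪ {g}) ∩ S` is just `{g}`. -/
def Thin {G : Type*} [Group G] (S : Set G) : Prop :=
  ∀ F : Finset G, ∃ H : Finset G, ∀ g ∈ S, g ∉ H →
    ((F : Set G) * {g} ∪ {g}) ∩ S = {g}

lemma thin_aux {G : Type*} [Group G] {S T : Set G} (hS : Thin S) (f : S ≃ T) :
    ∀ F : Finset G, ∃ F' : Finset G, ∀ x y : S,
      (y : G) ∈ (F : Set G) * {(x : G)} ∪ {(x : G)} →
      (f y : G) ∈ (F' : Set G) * {(f x : G)} ∪ {(f x : G)} := by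
  intro F
  obtain ⟨H, hH⟩ := hS F
  set P : Set (S × S) :=
    {p | (p.1 : G) ∈ H ∧ (p.2 : G) ∈ (F : Set G) * {(p.1 : G)} ∪ {(p.1 : G)}} with hP
  have hPfin : P.Finite := by
    have hsub : P ⊆ (fun p : S × S => ((p.1 : G), (p.2 : G))) ⁻¹'
        ((H : Set G) ×ˢ (((F : Set G) * (H : Set G)) ∪ (H : Set G))) := by
      intro p hp
      refine ⟨hp.1, ?_⟩
      rcases hp.2 with h | h
      · left
        obtain ⟨a, ha, b, hb, hab⟩ := h
        simp only [Set.mem_singleton_iff] at hb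
        show (p.2 : G) ∈ _
        rw [← hab, hb]
        exact Set.mul_mem_mul ha hp.1
      · right
        simp only [Set.mem_singleton_iff] at h
        show (p.2 : G) ∈ _
        rw [h]; exact hp.1
    refine Set.Finite.subset (Set.Finite.preimage ?_ ?_) hsub
    · intro p _ q _ h
      simp only [Prod.mk.injEq] at h
      exact Prod.ext (Subtype.ext h.1) (Subtype.ext h.2)
    · exact H.finite_toSet.prod ((F.finite_toSet.mul H.finite_toSet).union H.finite_toSet)
  have hKfin : ((fun p : S × S => (f p.2 : G) * (f p.1 : G)⁻¹) '' P).Finite :=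
    hPfin.image _
  refine ⟨hKfin.toFinset, ?_⟩
  intro x y hy
  by_cases hx : (x : G) ∈ H
  · left
    refine ⟨(f y : G) * (f x : G)⁻¹, ?_, (f x : G), rfl, by group⟩
    rw [Set.Finite.coe_toFinset]
    exact ⟨(x, y), ⟨hx, hy⟩, rfl⟩
  · have hball := hH (x : G) x.2 hx
    have hy' : (y : G) ∈ ((F : Set G) * {(x : G)} ∪ {(x : G)}) ∩ S := ⟨hy, y.2⟩
    rw [hball] at hy'
    have : y = x := Subtype.ext hy'
    subst this
    right; rfl

/-- If `S` and `T` are thin subsets of a group `G`, then every bijection `f : S ≃ T` is an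
asymorphism; in particular, any two thin subsets of the same cardinality are asymorphic. -/
theorem thin_bijection_isAsymorphism
    (G : Type*) [Group G] (S T : Set G) (hS : Thin S) (hT : Thin T) :
    ∀ f : S ≃ T, IsAsymorphism S T f := by
  intro f
  exact ⟨thin_aux hS f, thin_aux hT f.symm⟩
end

section
/- Let G be an infinite group. Then every thin subset of G is small; that is, if S ⊆ G is thin, then for every large subset L of G, the set L ∖ S is large in G. -/
open Pointwise

/-- `L ⊆ G` is large in `G`: there is a finite `F ⊆ G` with `G = (F·L) ∪ L`. -/
def LargeSet {G : Type*} [Group G] (L : Set G) : Prop :=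
  ∃ F : Finset G, (F : Set G) * L ∪ L = Set.univ

/-- In an infinite group, every thin subset is small: removing it from any large subset
leaves a large subset. -/
theorem thin_is_small
    (G : Type*) [Group G] [Infinite G] (S : Set G) (hS : Thin S) :
    ∀ L : Set G, LargeSet L → LargeSet (L \ S) := by
  classical
  intro L hL
  obtain ⟨F₀, hF₀⟩ := hL
  set F : Finset G := insert 1 F₀ with hFdef
  have hcov : ∀ g : G, ∃ f ∈ F, ∃ x ∈ L, f * x = g := by
    intro g
    have hg : g ∈ (F₀ : Set G) * L ∪ L := hF₀.symm ▸ Set.mem_univ g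
    rcases hg with h | h
    · obtain ⟨f, hf, x, hx, hfx⟩ := h
      exact ⟨f, Finset.mem_insert_of_mem hf, x, hx, hfx⟩
    · exact ⟨1, Finset.mem_insert_self _ _, g, h, one_mul g⟩
  obtain ⟨u, hu⟩ := Infinite.exists_notMem_finset (F * F⁻¹)
  obtain ⟨H, hH⟩ := hS (F⁻¹ * {u} * F)
  have key : ∀ g : G, g ∉ (F * H : Finset G) →
      ∃ f ∈ ((F ∪ {u⁻¹} * F) : Finset G), ∃ x ∈ L \ S, f * x = g := by
    intro g hg
    obtain ⟨f, hf, x, hx, hfx⟩ := hcov g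
    by_cases hxS : x ∈ S
    · have hxH : x ∉ H := by
        intro hxh
        exact hg (hfx ▸ Finset.mul_mem_mul hf hxh)
      subst hfx
      obtain ⟨f', hf', x', hx', hfx'⟩ := hcov (u * (f * x))
      by_cases hx'S : x' ∈ S
      · exfalso
        have hx'eq : f'⁻¹ * u * f * x = x' := by
          rw [mul_assoc (f'⁻¹ * u) f x, mul_assoc f'⁻¹ u (f * x), ← hfx',
            inv_mul_cancel_left]
        have hmem : x' ∈ (((F⁻¹ * {u} * F : Finset G) : Set G) * {x} ∪ {x}) ∩ S := by
          refine ⟨Or.inl ?_, hx'S⟩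
          refine ⟨f'⁻¹ * u * f, ?_, x, rfl, hx'eq⟩
          exact_mod_cast Finset.mul_mem_mul
            (Finset.mul_mem_mul (Finset.inv_mem_inv hf') (Finset.mem_singleton_self u)) hf
        rw [hH x hxS hxH] at hmem
        have hx'x : x' = x := hmem
        have h : f' * x = u * (f * x) := by rw [hx'x] at hfx'; exact hfx'
        have h2 : u * f = f' := mul_right_cancel (b := x) (by rw [mul_assoc]; exact h.symm)
        have h3 : u = f' * f⁻¹ := by rw [← h2, mul_inv_cancel_right]
        exact hu (h3 ▸ Finset.mul_mem_mul hf' (Finset.inv_mem_inv hf))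
      · refine ⟨u⁻¹ * f', ?_, x', ⟨hx', hx'S⟩, ?_⟩
        · exact Finset.mem_union_right _
            (Finset.mul_mem_mul (Finset.mem_singleton_self _) hf')
        · rw [mul_assoc u⁻¹ f' x', hfx', inv_mul_cancel_left]
    · exact ⟨f, Finset.mem_union_left _ hf, x, ⟨hx, hxS⟩, hfx⟩
  obtain ⟨g₀, hg₀⟩ := Infinite.exists_notMem_finset (F * H)
  obtain ⟨f₀, -, z, hz, -⟩ := key g₀ hg₀
  refine ⟨(F ∪ {u⁻¹} * F) ∪ (F * H) * {z⁻¹}, ?_⟩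
  apply Set.eq_univ_of_forall
  intro g
  left
  by_cases hg : g ∈ (F * H : Finset G)
  · refine ⟨g * z⁻¹, ?_, z, hz, by group⟩
    exact_mod_cast Finset.mem_union_right _
      (Finset.mul_mem_mul hg (Finset.mem_singleton_self z⁻¹))
  · obtain ⟨f, hf, x, hx, hfx⟩ := key g hg
    exact ⟨f, by exact_mod_cast Finset.mem_union_left _ hf, x, hx, hfx⟩
end
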